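/- arXiv:math/0106244 — 2 statements merged into one kernel-verified Lean document; each statement's English description precedes it below -/
import Mathlib

section
/- Let t and s be subforests of an n-colored forest u, and let v be a vertex of s. Set t' = t ∪ {v}, s' = s ∩ t', t'' = (u ∖ t) ∪ {v} and s'' = s ∩ t'', all viewed as subforests of u (with their induced orders and colorings, s' viewed as a subforest of t' and s'' as a subforest of t''). Then for every color k ∈ {1,…,n}: p_k(v,s,u) = p_k(v,s',t') + p_k(v,s'',t''). -/
/- STATEMENT 0: the cut-and-paste lemma for the counting functions p_k.
For subforests t, s of u and v ∈ s, with t' = t ∪ {v}, s' = s ∩ t',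
t'' = (u ∖ t) ∪ {v}, s'' = s ∩ t'' (all viewed as subforests of u):
p_k(v,s,u) = p_k(v,s',t') + p_k(v,s'',t''). -/


/- Core combinatorics of n-edge-colored rooted forests.

A forest is encoded by a finite set of vertices (natural numbers), a
parent function (pointing one step towards the root) and a coloring
function assigning to each non-root vertex the color of the edge
connecting it to its parent.  Well-formedness (`WF`) asks that the parent
function is supported on the vertex set and is acyclic. -/

open scoped Classical

noncomputable section

structure PForest (n : ℕ) where
  verts : Finset ℕ
  parent : ℕ → Option ℕ
  color : ℕ → Fin n

namespace PForest

variable {n : ℕ}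

/-- well-formedness: edges join vertices, and the parent relation is
acyclic. -/
def WF (t : PForest n) : Prop :=
  (∀ v w : ℕ, t.parent v = some w → v ∈ t.verts ∧ w ∈ t.verts) ∧
    ∃ rk : ℕ → ℕ, ∀ v w : ℕ, t.parent v = some w → rk w < rk v

/-- one step towards the root: `w` is the parent of `v`. -/
def Step (t : PForest n) (v w : ℕ) : Prop := t.parent v = some w

/-- `w` lies (weakly) on the path from `v` to the root of its component. -/
def Anc (t : PForest n) (v w : ℕ) : Prop := Relation.ReflTransGen t.Step v w

def nearestAncAux (t : PForest n) (S : Finset ℕ) : ℕ → ℕ → Option ℕ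
  | 0, _ => none
  | fuel + 1, v =>
    match t.parent v with
    | none => none
    | some w => if w ∈ S then some w else nearestAncAux t S fuel w

/-- the first vertex of `S` strictly below `v`; this is the parent of `v`
in the subforest induced on `S`. -/
def nearestAnc (t : PForest n) (S : Finset ℕ) (v : ℕ) : Option ℕ :=
  nearestAncAux t S t.verts.card v

def lastBeforeAux (t : PForest n) (S : Finset ℕ) : ℕ → ℕ → ℕ
  | 0, v => v
  | fuel + 1, v =>
    match t.parent v with
    | none => v
    | some w => if w ∈ S then v else lastBeforeAux t S fuel w

/-- the last vertex on the path from `v` down to `nearestAnc t S v`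
before reaching it; the color of the edge of the induced subforest below
`v` is the (ambient) color of this vertex. -/
def lastBefore (t : PForest n) (S : Finset ℕ) (v : ℕ) : ℕ :=
  lastBeforeAux t S t.verts.card v

/-- `pcount t S s j v` is the number of edges of (induced) color `j` on
the path from `v` to the root of its component in the subforest of `t`
induced on `S`, whose lower vertex lies outside `s`.  (Edges of the
induced subforest are indexed by their upper vertex `x`; the lower vertex
is `nearestAnc t S x` and the induced color is the ambient color of
`lastBefore t S x`.) -/
def pcount (t : PForest n) (S s : Finset ℕ) (j : Fin n) (v : ℕ) : ℕ :=
  (S.filter fun x => t.Anc v x ∧ t.color (t.lastBefore S x) = j ∧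
      ∃ w, t.nearestAnc S x = some w ∧ w ∉ s).card

/-- the subforest of `u` induced on `S`, as a forest in its own right. -/
def restrict (u : PForest n) (S : Finset ℕ) : PForest n where
  verts := S ∩ u.verts
  parent := fun v => if v ∈ S ∩ u.verts then u.nearestAnc S v else none
  color := fun v => u.color (u.lastBefore S v)

/-- a forest is a (nonempty) tree when it has exactly one root. -/
def IsTree (t : PForest n) : Prop :=
  (t.verts.filter fun v => t.parent v = none).card = 1

/-- `e` is an isomorphism of n-colored forests from `s` to `t`: a
bijection of the vertices preserving the parent relation and the colors
of edges. -/
def IsIsoFn (s t : PForest n) (e : {x // x ∈ s.verts} ≃ {x // x ∈ t.verts}) : Prop :=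
  (∀ v w : {x // x ∈ s.verts},
      s.parent (v : ℕ) = some (w : ℕ) ↔ t.parent ((e v : ℕ)) = some ((e w : ℕ))) ∧
    ∀ v : {x // x ∈ s.verts}, (s.parent (v : ℕ)).isSome →
      t.color ((e v : ℕ)) = s.color (v : ℕ)

/-- isomorphism of n-colored forests. -/
def PIso (s t : PForest n) : Prop := ∃ e, IsIsoFn s t e

end PForest

/-- a (well-formed, nonempty) n-colored rooted tree. -/
def TreeObj (n : ℕ) : Type := {t : PForest n // t.WF ∧ t.IsTree}

/-- isomorphism classes of n-colored rooted trees. -/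
def TreeClass (n : ℕ) : Type := Quot fun a b : TreeObj n => PForest.PIso a.1 b.1

/-- the one-vertex tree. -/
def unitTree (n : ℕ) [NeZero n] : PForest n :=
  ⟨{0}, fun _ => none, fun _ => 0⟩

theorem unitTree_wf (n : ℕ) [NeZero n] : (unitTree n).WF :=
  ⟨fun v w h => by simp [unitTree] at h, ⟨id, fun v w h => by simp [unitTree] at h⟩⟩

theorem unitTree_isTree (n : ℕ) [NeZero n] : (unitTree n).IsTree := by
  simp [PForest.IsTree, unitTree]

def defaultTreeObj (n : ℕ) [NeZero n] : TreeObj n :=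
  ⟨unitTree n, unitTree_wf n, unitTree_isTree n⟩

/-- the isomorphism class of a tree (junk value: the class of the
one-vertex tree, if the given forest is not a well-formed tree). -/
def mkClass {n : ℕ} [NeZero n] (t : PForest n) : TreeClass n :=
  if h : t.WF ∧ t.IsTree then Quot.mk _ (⟨t, h⟩ : TreeObj n)
  else Quot.mk _ (defaultTreeObj n)

end

namespace PForest

variable {n : ℕ} {u : PForest n}

theorem step_of {v w : ℕ} (h : u.parent v = some w) : u.Step v w := h

theorem anc_rank {rk : ℕ → ℕ} (hrk : ∀ v w, u.parent v = some w → rk w < rk v)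
    {a b : ℕ} (h : u.Anc a b) : rk b ≤ rk a := by
  induction h with
  | refl => exact le_rfl
  | tail _ hbc ih => exact ((hrk _ _ hbc).le).trans ih

theorem anc_antisymm (hu : u.WF) {a b : ℕ} (h1 : u.Anc a b) (h2 : u.Anc b a) : a = b := by
  obtain ⟨-, rk, hrk⟩ := hu
  by_contra hne
  rcases Relation.ReflTransGen.cases_head h1 with h | ⟨c, hc, hcb⟩
  · exact hne h
  · have hlt : rk b < rk a := lt_of_le_of_lt (anc_rank hrk hcb) (hrk _ _ hc)
    have hle : rk a ≤ rk b := anc_rank hrk h2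
    omega

theorem anc_total {a b : ℕ} (hab : u.Anc a b) :
    ∀ c, u.Anc a c → u.Anc b c ∨ u.Anc c b := by
  induction hab using Relation.ReflTransGen.head_induction_on with
  | refl => exact fun c h => Or.inl h
  | @head a m hstep htail ih =>
      intro c hac
      rcases Relation.ReflTransGen.cases_head hac with h | ⟨d, hd, hdc⟩
      · subst h
        exact Or.inr (Relation.ReflTransGen.head hstep htail)
      · have hd' : u.parent a = some d := hd
        have hst' : u.parent a = some m := hstep
        rw [hst'] at hd'
        obtain rfl : m = d := Option.some.inj hd'
        exact ih c hdc

theorem card_anc_lt (hu : u.WF) {v w : ℕ} (h : u.parent v = some w) :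
    (u.verts.filter fun z => u.Anc w z).card < (u.verts.filter fun z => u.Anc v z).card := by
  obtain ⟨hE, rk, hrk⟩ := hu
  apply Finset.card_lt_card
  rw [Finset.ssubset_def]
  constructor
  · intro z hz
    simp only [Finset.mem_filter] at hz ⊢
    exact ⟨hz.1, Relation.ReflTransGen.head h hz.2⟩
  · intro hsub
    have hv : v ∈ u.verts := (hE _ _ h).1
    have hmem : v ∈ u.verts.filter fun z => u.Anc v z := by
      simp only [Finset.mem_filter]
      exact ⟨hv, Relation.ReflTransGen.refl⟩
    have hmem2 := hsub hmem
    simp only [Finset.mem_filter] at hmem2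
    have h1 := anc_rank hrk hmem2.2
    have h2 := hrk _ _ h
    omega

theorem parent_none_aux (S : Finset ℕ) {v : ℕ} (h : u.parent v = none) :
    ∀ f, u.nearestAncAux S f v = none := by
  intro f; cases f <;> simp [nearestAncAux, h]

theorem parent_none_aux' (S : Finset ℕ) {v : ℕ} (h : u.parent v = none) :
    ∀ f, u.lastBeforeAux S f v = v := by
  intro f; cases f <;> simp [lastBeforeAux, h]

theorem aux_stable (hu : u.WF) (S : Finset ℕ) :
    ∀ c v f₁ f₂, (u.verts.filter fun z => u.Anc v z).card ≤ c → c ≤ f₁ → c ≤ f₂ →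
      u.nearestAncAux S f₁ v = u.nearestAncAux S f₂ v ∧
      u.lastBeforeAux S f₁ v = u.lastBeforeAux S f₂ v := by
  intro c
  induction c with
  | zero =>
    intro v f₁ f₂ hc _ _
    have hpn : u.parent v = none := by
      cases hp : u.parent v with
      | none => rfl
      | some w =>
        have hv : v ∈ u.verts := (hu.1 _ _ hp).1
        have hmem : v ∈ u.verts.filter fun z => u.Anc v z := by
          simp only [Finset.mem_filter]
          exact ⟨hv, Relation.ReflTransGen.refl⟩
        have := Finset.card_pos.mpr ⟨v, hmem⟩
        omega
    exact ⟨by rw [parent_none_aux S hpn, parent_none_aux S hpn],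
           by rw [parent_none_aux' S hpn, parent_none_aux' S hpn]⟩
  | succ c ih =>
    intro v f₁ f₂ hc h1 h2
    cases hp : u.parent v with
    | none =>
      exact ⟨by rw [parent_none_aux S hp, parent_none_aux S hp],
             by rw [parent_none_aux' S hp, parent_none_aux' S hp]⟩
    | some w =>
      have hv : v ∈ u.verts := (hu.1 _ _ hp).1
      have hvpos : 1 ≤ (u.verts.filter fun z => u.Anc v z).card := by
        apply Finset.card_pos.mpr
        exact ⟨v, by simp only [Finset.mem_filter]; exact ⟨hv, Relation.ReflTransGen.refl⟩⟩
      obtain ⟨a, rfl⟩ : ∃ a, f₁ = a + 1 := ⟨f₁ - 1, by omega⟩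
      obtain ⟨b, rfl⟩ : ∃ b, f₂ = b + 1 := ⟨f₂ - 1, by omega⟩
      have hcw : (u.verts.filter fun z => u.Anc w z).card ≤ c := by
        have := card_anc_lt hu hp; omega
      have hrec := ih w a b hcw (by omega) (by omega)
      constructor
      · simp only [nearestAncAux, hp]
        by_cases hw : w ∈ S
        · simp [hw]
        · simp only [hw, if_false]
          exact hrec.1
      · simp only [lastBeforeAux, hp]
        by_cases hw : w ∈ S
        · simp [hw]
        · simp only [hw, if_false]
          exact hrec.2

theorem nearestAnc_step (hu : u.WF) (S : Finset ℕ) {v w : ℕ} (hp : u.parent v = some w) :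
    u.nearestAnc S v = (if w ∈ S then some w else u.nearestAnc S w) ∧
    u.lastBefore S v = (if w ∈ S then v else u.lastBefore S w) := by
  have hv : v ∈ u.verts := (hu.1 _ _ hp).1
  have hpos : 0 < u.verts.card := Finset.card_pos.mpr ⟨v, hv⟩
  obtain ⟨a, ha⟩ : ∃ a, u.verts.card = a + 1 := ⟨u.verts.card - 1, by omega⟩
  have hDw : (u.verts.filter fun z => u.Anc w z).card ≤ a := by
    have h1 := card_anc_lt hu hp
    have h2 : (u.verts.filter fun z => u.Anc v z).card ≤ u.verts.card :=
      Finset.card_filter_le _ _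
    omega
  have hst := aux_stable hu S (u.verts.filter fun z => u.Anc w z).card w a u.verts.card
      le_rfl hDw (Finset.card_filter_le _ _)
  constructor
  · show u.nearestAncAux S u.verts.card v = _
    rw [ha]
    simp only [nearestAncAux, hp]
    by_cases hw : w ∈ S
    · simp [hw]
    · simp only [hw, if_false]
      exact hst.1
  · show u.lastBeforeAux S u.verts.card v = _
    rw [ha]
    simp only [lastBeforeAux, hp]
    by_cases hw : w ∈ S
    · simp [hw]
    · simp only [hw, if_false]
      exact hst.2

theorem nearestAnc_none (S : Finset ℕ) {v : ℕ} (h : u.parent v = none) :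
    u.nearestAnc S v = none :=
  parent_none_aux S h _

theorem nearestAnc_spec (hu : u.WF) (S : Finset ℕ) {v w : ℕ}
    (h : u.nearestAnc S v = some w) :
    w ∈ S ∧ u.Anc v w ∧ u.Anc v (u.lastBefore S v) ∧
      u.parent (u.lastBefore S v) = some w ∧
      ∀ z, u.Anc v z → z ≠ v → u.Anc z (u.lastBefore S v) → z ∉ S := by
  obtain ⟨rk, hrk⟩ := hu.2
  suffices H : ∀ m v w, rk v ≤ m → u.nearestAnc S v = some w →
      w ∈ S ∧ u.Anc v w ∧ u.Anc v (u.lastBefore S v) ∧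
        u.parent (u.lastBefore S v) = some w ∧
        ∀ z, u.Anc v z → z ≠ v → u.Anc z (u.lastBefore S v) → z ∉ S by
    exact H (rk v) v w le_rfl h
  intro m
  induction m with
  | zero =>
    intro v w hm h
    cases hp : u.parent v with
    | none => rw [nearestAnc_none S hp] at h; cases h
    | some w' => have := hrk _ _ hp; omega
  | succ m ih =>
    intro v w hm h
    cases hp : u.parent v with
    | none => rw [nearestAnc_none S hp] at h; cases h
    | some w' =>
      obtain ⟨hna, hlb⟩ := nearestAnc_step hu S hp
      by_cases hw' : w' ∈ S
      · rw [hna, if_pos hw'] at h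
        obtain rfl : w' = w := Option.some.inj h
        have hlbv : u.lastBefore S v = v := by rw [hlb, if_pos hw']
        refine ⟨hw', Relation.ReflTransGen.single hp,
            by rw [hlbv]; exact Relation.ReflTransGen.refl,
            by rw [hlbv]; exact hp, ?_⟩
        intro z hvz hzv hzy
        rw [hlbv] at hzy
        intro _
        exact hzv (anc_antisymm hu hzy hvz)
      · rw [hna, if_neg hw'] at h
        have hm' : rk w' ≤ m := by have := hrk _ _ hp; omega
        obtain ⟨hwS, hanc, hancy, hpy, hint⟩ := ih w' w hm' h
        have hlbv : u.lastBefore S v = u.lastBefore S w' := by rw [hlb, if_neg hw']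
        refine ⟨hwS, Relation.ReflTransGen.head hp hanc, ?_, ?_, ?_⟩
        · rw [hlbv]; exact Relation.ReflTransGen.head hp hancy
        · rw [hlbv]; exact hpy
        · intro z hvz hzv hzy
          rw [hlbv] at hzy
          rcases Relation.ReflTransGen.cases_head hvz with heq | ⟨d, hd, hdz⟩
          · exact absurd heq.symm hzv
          · have hd' : u.parent v = some d := hd
            rw [hp] at hd'
            obtain rfl : w' = d := Option.some.inj hd'
            by_cases hzw : z = w'
            · subst hzw; exact hw'
            · exact hint z hdz hzw hzy

theorem exists_upper (hu : u.WF) (S : Finset ℕ) {z y w : ℕ}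
    (hzy : u.Anc z y) (hp : u.parent y = some w) (hw : w ∈ S) :
    ∃ x, u.Anc z x ∧ u.Anc x y ∧ u.nearestAnc S x = some w ∧
      u.lastBefore S x = y ∧ (x ∈ S ∨ x = z) := by
  induction hzy using Relation.ReflTransGen.head_induction_on with
  | refl =>
      obtain ⟨hna, hlb⟩ := nearestAnc_step hu S hp
      exact ⟨y, Relation.ReflTransGen.refl, Relation.ReflTransGen.refl,
        by rw [hna, if_pos hw], by rw [hlb, if_pos hw], Or.inr rfl⟩
  | @head a c hstep htail ih =>
      obtain ⟨x, hcx, hxy, hna, hlb, hxS⟩ := ih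
      rcases hxS with hxS | rfl
      · exact ⟨x, Relation.ReflTransGen.head hstep hcx, hxy, hna, hlb, Or.inl hxS⟩
      · by_cases hcS : x ∈ S
        · exact ⟨x, Relation.ReflTransGen.head hstep hcx, hxy, hna, hlb, Or.inl hcS⟩
        · have hpa : u.parent a = some x := hstep
          obtain ⟨hna2, hlb2⟩ := nearestAnc_step hu S hpa
          exact ⟨a, Relation.ReflTransGen.refl, Relation.ReflTransGen.head hstep hxy,
            by rw [hna2, if_neg hcS]; exact hna,
            by rw [hlb2, if_neg hcS]; exact hlb, Or.inr rfl⟩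

theorem lastBefore_inj (hu : u.WF) (S : Finset ℕ) {v x₁ x₂ w₁ w₂ : ℕ}
    (h1S : x₁ ∈ S) (h2S : x₂ ∈ S) (h1 : u.Anc v x₁) (h2 : u.Anc v x₂)
    (hn1 : u.nearestAnc S x₁ = some w₁) (hn2 : u.nearestAnc S x₂ = some w₂)
    (heq : u.lastBefore S x₁ = u.lastBefore S x₂) : x₁ = x₂ := by
  obtain ⟨-, -, hy1, -, hint1⟩ := nearestAnc_spec hu S hn1
  obtain ⟨-, -, hy2, -, hint2⟩ := nearestAnc_spec hu S hn2
  rcases anc_total h1 x₂ h2 with h12 | h21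
  · by_contra hne
    exact hint1 x₂ h12 (Ne.symm hne) (by rw [heq]; exact hy2) h2S
  · by_contra hne
    exact hint2 x₁ h21 hne (by rw [← heq]; exact hy1) h1S

theorem pcount_side (hu : u.WF) (s S : Finset ℕ)
    (v : ℕ) (hv : v ∈ S) (k : Fin n) (q : ℕ → Prop)
    (hq : ∀ w, w ∈ u.verts → w ∉ s → (w ∈ S ↔ q w)) :
    u.pcount S (s ∩ S) k v =
      (u.verts.filter fun x => u.Anc v x ∧ u.color (u.lastBefore u.verts x) = k ∧
        ∃ w, u.nearestAnc u.verts x = some w ∧ w ∉ s ∧ q w).card := by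
  classical
  unfold pcount
  apply Finset.card_bij (fun x _ => u.lastBefore S x)
  · intro x hx
    simp only [Finset.mem_filter] at hx ⊢
    obtain ⟨hxS, hvx, hcol, w, hna, hws⟩ := hx
    obtain ⟨hwS, hxw, hxy, hpy, -⟩ := nearestAnc_spec hu S hna
    have hws' : w ∉ s := fun h => hws (Finset.mem_inter.mpr ⟨h, hwS⟩)
    have hyv : u.lastBefore S x ∈ u.verts := (hu.1 _ _ hpy).1
    have hwv : w ∈ u.verts := (hu.1 _ _ hpy).2
    obtain ⟨hna2, hlb2⟩ := nearestAnc_step hu u.verts hpy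
    refine ⟨hyv, Relation.ReflTransGen.trans hvx hxy, ?_,
      w, ?_, hws', (hq w hwv hws').mp hwS⟩
    · rw [hlb2, if_pos hwv]; exact hcol
    · rw [hna2, if_pos hwv]
  · intro x₁ h₁ x₂ h₂ heq
    simp only [Finset.mem_filter] at h₁ h₂
    obtain ⟨h1S, h1v, -, w₁, hn1, -⟩ := h₁
    obtain ⟨h2S, h2v, -, w₂, hn2, -⟩ := h₂
    exact lastBefore_inj hu S h1S h2S h1v h2v hn1 hn2 heq
  · intro y hy
    simp only [Finset.mem_filter] at hy
    obtain ⟨hyv, hvy, hcol, w, hna, hws, hqw⟩ := hy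
    cases hp : u.parent y with
    | none => rw [nearestAnc_none u.verts hp] at hna; cases hna
    | some w' =>
        obtain ⟨hna2, hlb2⟩ := nearestAnc_step hu u.verts hp
        have hw'v : w' ∈ u.verts := (hu.1 _ _ hp).2
        rw [hna2, if_pos hw'v] at hna
        obtain rfl : w' = w := Option.some.inj hna
        have hlby : u.lastBefore u.verts y = y := by rw [hlb2, if_pos hw'v]
        have hwS : w' ∈ S := (hq _ hw'v hws).mpr hqw
        obtain ⟨x, hvx, hxy, hnax, hlbx, hxm⟩ := exists_upper hu S hvy hp hwS
        have hxS : x ∈ S := hxm.elim id (fun h => h ▸ hv)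
        refine ⟨x, Finset.mem_filter.mpr ⟨hxS, hvx, ?_, w', hnax, ?_⟩, hlbx⟩
        · rw [hlbx]
          rw [hlby] at hcol
          exact hcol
        · intro hmem
          exact hws (Finset.mem_inter.mp hmem).1

end PForest

open PForest in
theorem pcount_cut_paste {n : ℕ} (u : PForest n) (hu : u.WF)
    (t s : Finset ℕ) (ht : t ⊆ u.verts) (hs : s ⊆ u.verts)
    (v : ℕ) (hv : v ∈ s) (k : Fin n) :
    u.pcount u.verts s k v =
      u.pcount (t ∪ {v}) (s ∩ (t ∪ {v})) k v +
        u.pcount ((u.verts \ t) ∪ {v}) (s ∩ ((u.verts \ t) ∪ {v})) k v := by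
  classical
  have hq1 : ∀ w, w ∈ u.verts → w ∉ s → (w ∈ t ∪ {v} ↔ w ∈ t) := by
    intro w hwv hws
    constructor
    · intro h
      rcases Finset.mem_union.mp h with h | h
      · exact h
      · have : w = v := Finset.mem_singleton.mp h
        subst this
        exact absurd hv hws
    · exact fun h => Finset.mem_union_left _ h
  have hq2 : ∀ w, w ∈ u.verts → w ∉ s → (w ∈ (u.verts \ t) ∪ {v} ↔ w ∉ t) := by
    intro w hwv hws
    constructor
    · intro h
      rcases Finset.mem_union.mp h with h | h
      · exact (Finset.mem_sdiff.mp h).2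
      · have : w = v := Finset.mem_singleton.mp h
        subst this
        exact absurd hv hws
    · exact fun h => Finset.mem_union_left _ (Finset.mem_sdiff.mpr ⟨hwv, h⟩)
  rw [PForest.pcount_side hu s (t ∪ {v}) v
      (Finset.mem_union_right _ (Finset.mem_singleton_self v)) k (fun w => w ∈ t) hq1,
    PForest.pcount_side hu s ((u.verts \ t) ∪ {v}) v
      (Finset.mem_union_right _ (Finset.mem_singleton_self v)) k (fun w => w ∉ t) hq2]
  unfold PForest.pcount
  rw [← Finset.card_filter_add_card_filter_not
      (p := fun x => ∃ w, u.nearestAnc u.verts x = some w ∧ w ∈ t)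
      (s := u.verts.filter fun x => u.Anc v x ∧ u.color (u.lastBefore u.verts x) = k ∧
        ∃ w, u.nearestAnc u.verts x = some w ∧ w ∉ s)]
  congr 1
  · congr 1
    ext x
    simp only [Finset.mem_filter, and_assoc]
    constructor
    · rintro ⟨hxv, hanc, hcol, ⟨w, hna, hws⟩, w', hna', hwt⟩
      rw [hna] at hna'
      obtain rfl : w = w' := Option.some.inj hna'
      exact ⟨hxv, hanc, hcol, w, hna, hws, hwt⟩
    · rintro ⟨hxv, hanc, hcol, w, hna, hws, hwt⟩
      exact ⟨hxv, hanc, hcol, ⟨w, hna, hws⟩, w, hna, hwt⟩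
  · congr 1
    ext x
    simp only [Finset.mem_filter, and_assoc, not_exists]
    constructor
    · rintro ⟨hxv, hanc, hcol, ⟨w, hna, hws⟩, hnp⟩
      exact ⟨hxv, hanc, hcol, w, hna, hws, fun hwt => hnp w ⟨hna, hwt⟩⟩
    · rintro ⟨hxv, hanc, hcol, w, hna, hws, hwt⟩
      refine ⟨hxv, hanc, hcol, ⟨w, hna, hws⟩, fun w' hw' => ?_⟩
      rw [hna] at hw'
      obtain rfl : w = w' := Option.some.inj hw'.1
      exact hwt hw'.2
end

section
/- Let Δ : C_n → C_n ⊗ C_n be the k-linear map defined on the monomial basis by Δ(t) = Σ_{s ⊆ t} q(s,t) · s ⊗ s^c for every n-colored forest t, where the sum is over all subforests s of t, and let ε : C_n → k be the algebra homomorphism with ε(1) = 1 and ε(t) = 0 for every nonempty tree t. Then Δ is an algebra homomorphism, Δ is coassociative ((Δ ⊗ id) ∘ Δ = (id ⊗ Δ) ∘ Δ), and ε is a counit for Δ; thus (C_n, Δ, ε) is a commutative bialgebra over k. -/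
/- STATEMENT 1: `C_n` (the polynomial algebra on isomorphism classes of
n-colored rooted trees) with the comultiplication
`Δ(t) = Σ_{s ⊆ t} q(s,t) · s ⊗ s^c` (sum over subforests) and the counit
`ε(1) = 1, ε(t) = 0` is a commutative bialgebra: Δ is an algebra map
satisfying this formula on every forest monomial, Δ is coassociative and
ε is a counit for Δ. -/



/- Core combinatorics of n-edge-colored rooted forests.

A forest is encoded by a finite set of vertices (natural numbers), a
parent function (pointing one step towards the root) and a coloring
function assigning to each non-root vertex the color of the edge
connecting it to its parent.  Well-formedness (`WF`) asks that the parent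
function is supported on the vertex set and is acyclic. -/

open scoped Classical

noncomputable section

open PForest TensorProduct

variable (K : Type*) [Field K] {n : ℕ}

namespace PForest

/-- the component of the subforest induced on `S` rooted at `r`: the set
of `x ∈ S` whose path to the root passes through `r`. -/
def compSet (u : PForest n) (S : Finset ℕ) (r : ℕ) : Finset ℕ :=
  S.filter fun x => u.Anc x r

/-- the roots of the subforest induced on `S`: the elements of `S` with
no further element of `S` strictly below them. -/
def sroots (u : PForest n) (S : Finset ℕ) : Finset ℕ :=
  S.filter fun r => ∀ w ∈ S, u.Anc r w → w = r

end PForest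

/-- `C_n`: the polynomial algebra on the isomorphism classes of
n-colored rooted trees; its monomial basis is given by the (isomorphism
classes of) n-colored forests. -/
abbrev Cn (K : Type*) [Field K] (n : ℕ) : Type _ := MvPolynomial (TreeClass n) K

/-- the basis monomial of `C_n` corresponding to the subforest of `u`
induced on `S`: the product of the classes of its components. -/
def forestMonomial [NeZero n] (u : PForest n) (S : Finset ℕ) : Cn K n :=
  ∏ r ∈ PForest.sroots u S, MvPolynomial.X (mkClass (u.restrict (PForest.compSet u S r)))

/-- the coefficient `q(s,T)` (for `s` a subforest of the subforest of `u`
induced on `T`), for parameters `q1 j = q_{1j}`, `q2 j = q_{2j}`: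
`q(s,T) = ∏_j q_{1j}^{Σ_{v∈s} p_j(v,s,T)} · ∏_j q_{2j}^{Σ_{v∈T∖s} p_j(v,T∖s,T)}`. -/
def qcoef (q1 q2 : Fin n → K) (u : PForest n) (T s : Finset ℕ) : K :=
  (∏ j : Fin n, q1 j ^ ∑ v ∈ s, u.pcount T s j v) *
    ∏ j : Fin n, q2 j ^ ∑ v ∈ T \ s, u.pcount T (T \ s) j v

/-- `Δ(t) = Σ_{s ⊆ t} q(s,t) · s ⊗ s^c`, for a concrete forest `u`. -/
def subforestSum [NeZero n] (q1 q2 : Fin n → K) (u : PForest n) :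
    Cn K n ⊗[K] Cn K n :=
  ∑ S ∈ u.verts.powerset,
    qcoef K q1 q2 u u.verts S •
      (forestMonomial K u S ⊗ₜ[K] forestMonomial K u (u.verts \ S))

/-- the comultiplication of `C_n`, as the algebra map determined by the
subforest formula on (representatives of) tree classes. -/
def DeltaC [NeZero n] (q1 q2 : Fin n → K) :
    Cn K n →ₐ[K] Cn K n ⊗[K] Cn K n :=
  MvPolynomial.aeval fun T => subforestSum K q1 q2 (Quot.out T).1

/-- the counit of `C_n`: the algebra map vanishing on every tree. -/
def epsC [NeZero n] : Cn K n →ₐ[K] K :=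
  MvPolynomial.aeval fun _ : TreeClass n => (0 : K)

end

/-!
The comultiplication is defined as the algebra map sending the class of a tree `t` to the
subforest sum of a chosen representative, so the first task is to show that this sum does not
depend on the representative, and then that it is multiplicative over forests. A forest splits as
`C ∪ (V ∖ C)` with `C` the component of one of its roots; both pieces are closed under passing to
ancestors, so a subforest is a pair of subforests of the pieces, the forest monomials multiply,
and so do the coefficients `q`: an edge on the path from a vertex of `C` to its root stays in `C`.

The coefficients are handled through one observation: an edge of the subforest induced on `T`
lying on the path from `v` corresponds, through its last ambient vertex before the lower end, to
the ambient edge with the same lower vertex and the same color. Hence every exponent of `q(s, T)`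
counts ambient edges on the path from `v` to its root whose lower vertex lies in a given set.
These counts are additive in that set, which gives `q(S, V) q(A, S) = q(A, V) q(S ∖ A, V ∖ A)`
for `A ⊆ S ⊆ V`, and with it coassociativity after reindexing the pairs `A ⊆ S` by
`(A, S ∖ A)`. For the counit only `s = ∅` and `s = t` survive, with coefficient `1`. All three
identities are checked on the generators `X T`; both sides are algebra maps out of a polynomial
algebra.
-/

namespace Finset

variable {α M : Type*} [DecidableEq α] [AddCommMonoid M]

theorem sum_powerset_sum_powerset_union {C D : Finset α} (h : Disjoint C D) (F : Finset α → M) :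
    ∑ A ∈ C.powerset, ∑ B ∈ D.powerset, F (A ∪ B) = ∑ S ∈ (C ∪ D).powerset, F S := by
  rw [← sum_product']
  refine sum_nbij' (fun p => p.1 ∪ p.2) (fun S => (S ∩ C, S ∩ D)) ?_ ?_ ?_ ?_ fun _ _ => rfl
  · simp only [mem_product, mem_powerset, and_imp, Prod.forall]
    exact fun A B hA hB => union_subset_union hA hB
  · simp only [mem_product, mem_powerset]
    exact fun S _ => ⟨inter_subset_right, inter_subset_right⟩
  · simp only [mem_product, mem_powerset, Prod.forall, Prod.mk.injEq, and_imp]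
    intro A B hA hB
    have := disjoint_left.1 h
    constructor <;> ext x <;> grind
  · simp only [mem_powerset]
    intro S hS
    rw [← inter_union_distrib_left, inter_eq_left.2 hS]

theorem sum_powerset_sum_powerset_comm (V : Finset α) (F : Finset α → Finset α → M) :
    ∑ S ∈ V.powerset, ∑ A ∈ S.powerset, F S A =
      ∑ A ∈ V.powerset, ∑ B ∈ (V \ A).powerset, F (A ∪ B) A := by
  rw [sum_sigma', sum_sigma']
  refine sum_nbij' (fun p => ⟨p.2, p.1 \ p.2⟩) (fun p => ⟨p.1 ∪ p.2, p.1⟩) ?_ ?_ ?_ ?_ ?_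
  · simp only [mem_sigma, mem_powerset, and_imp, Sigma.forall]
    exact fun S A hS hA => ⟨hA.trans hS, sdiff_subset_sdiff hS le_rfl⟩
  · simp only [mem_sigma, mem_powerset, and_imp, Sigma.forall]
    exact fun A B hA hB => ⟨union_subset hA (hB.trans sdiff_subset), subset_union_left⟩
  · simp only [mem_sigma, mem_powerset, and_imp, Sigma.forall, Sigma.mk.injEq, heq_eq_eq]
    exact fun S A _ hA => ⟨union_sdiff_of_subset hA, trivial⟩
  · simp only [mem_sigma, mem_powerset, and_imp, Sigma.forall, Sigma.mk.injEq, heq_eq_eq]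
    refine fun A B _ hB => ⟨trivial, ?_⟩
    rw [union_sdiff_left, sdiff_eq_self_of_disjoint (disjoint_of_subset_left hB sdiff_disjoint)]
  · simp only [mem_sigma, mem_powerset, and_imp, Sigma.forall]
    exact fun S A _ hA => by rw [union_sdiff_of_subset hA]

end Finset

namespace MvPolynomial

open TensorProduct

variable {R σ : Type*} [CommSemiring R]

local notation "P" => MvPolynomial σ R

theorem coassoc_of_forall_X (Δ : P →ₐ[R] P ⊗[R] P)
    (h : ∀ i, TensorProduct.assoc R P P P (TensorProduct.map Δ.toLinearMap LinearMap.id (Δ (X i))) =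
      TensorProduct.map LinearMap.id Δ.toLinearMap (Δ (X i))) (x : P) :
    TensorProduct.assoc R P P P (TensorProduct.map Δ.toLinearMap LinearMap.id (Δ x)) =
      TensorProduct.map LinearMap.id Δ.toLinearMap (Δ x) := by
  have key : (Algebra.TensorProduct.assoc R R R P P P).toAlgHom.comp
      ((Algebra.TensorProduct.map Δ (AlgHom.id R P)).comp Δ) =
      (Algebra.TensorProduct.map (AlgHom.id R P) Δ).comp Δ :=
    algHom_ext h
  exact AlgHom.congr_fun key x

theorem lid_counit_of_forall_X (Δ : P →ₐ[R] P ⊗[R] P) (ε : P →ₐ[R] R)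
    (h : ∀ i, TensorProduct.lid R P (TensorProduct.map ε.toLinearMap LinearMap.id (Δ (X i))) = X i)
    (x : P) : TensorProduct.lid R P (TensorProduct.map ε.toLinearMap LinearMap.id (Δ x)) = x := by
  have key : (Algebra.TensorProduct.lid R P).toAlgHom.comp
      ((Algebra.TensorProduct.map ε (AlgHom.id R P)).comp Δ) = AlgHom.id R P :=
    algHom_ext h
  exact AlgHom.congr_fun key x

theorem rid_counit_of_forall_X (Δ : P →ₐ[R] P ⊗[R] P) (ε : P →ₐ[R] R)
    (h : ∀ i, TensorProduct.rid R P (TensorProduct.map LinearMap.id ε.toLinearMap (Δ (X i))) = X i)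
    (x : P) : TensorProduct.rid R P (TensorProduct.map LinearMap.id ε.toLinearMap (Δ x)) = x := by
  have key : (Algebra.TensorProduct.rid R R P).toAlgHom.comp
      ((Algebra.TensorProduct.map (AlgHom.id R P) ε).comp Δ) = AlgHom.id R P :=
    algHom_ext h
  exact AlgHom.congr_fun key x

end MvPolynomial

noncomputable section

open Relation

namespace PForest

variable {n : ℕ} {u : PForest n}

theorem step_det {v w w' : ℕ} (h : u.Step v w) (h' : u.Step v w') : w = w' :=
  Option.some.inj (h.symm.trans h')

theorem WF.step_mem (h : u.WF) {v w : ℕ} (hs : u.Step v w) : v ∈ u.verts ∧ w ∈ u.verts :=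
  h.1 v w hs

theorem WF.transGen_mem (h : u.WF) {v w : ℕ} (hs : TransGen u.Step v w) : w ∈ u.verts := by
  induction hs with
  | single h1 => exact (h.step_mem h1).2
  | tail _ h1 _ => exact (h.step_mem h1).2

theorem WF.anc_mem (h : u.WF) {v w : ℕ} (hs : u.Anc v w) (hv : v ∈ u.verts) : w ∈ u.verts := by
  rcases reflTransGen_iff_eq_or_transGen.1 hs with rfl | ht
  · exact hv
  · exact h.transGen_mem ht

theorem rank_lt_of_transGen {rk : ℕ → ℕ} (hrk : ∀ v w, u.Step v w → rk w < rk v) {v w : ℕ}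
    (h : TransGen u.Step v w) : rk w < rk v := by
  induction h with
  | single h1 => exact hrk _ _ h1
  | tail _ h1 ih => exact (hrk _ _ h1).trans ih

theorem rank_le_of_anc {rk : ℕ → ℕ} (hrk : ∀ v w, u.Step v w → rk w < rk v) {v w : ℕ}
    (h : u.Anc v w) : rk w ≤ rk v := by
  rcases reflTransGen_iff_eq_or_transGen.1 h with rfl | ht
  · exact le_rfl
  · exact (rank_lt_of_transGen hrk ht).le

theorem WF.not_transGen_self (h : u.WF) (v : ℕ) : ¬ TransGen u.Step v v := by
  obtain ⟨-, rk, hrk⟩ := h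
  exact fun hvv => lt_irrefl _ (rank_lt_of_transGen hrk hvv)

theorem transGen_of_anc_of_ne {v w : ℕ} (hvw : u.Anc v w) (hne : v ≠ w) :
    TransGen u.Step v w := by
  rcases reflTransGen_iff_eq_or_transGen.1 hvw with rfl | ht
  · exact absurd rfl hne
  · exact ht

theorem WF.anc_antisymm (h : u.WF) {v w : ℕ} (h1 : u.Anc v w) (h2 : u.Anc w v) : v = w := by
  by_contra hne
  exact h.not_transGen_self v
    ((transGen_of_anc_of_ne h1 hne).trans (transGen_of_anc_of_ne h2 (Ne.symm hne)))

theorem WF.rootward_induction (h : u.WF) {P : ℕ → Prop}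
    (ih : ∀ v, (∀ w, TransGen u.Step v w → P w) → P v) (v : ℕ) : P v := by
  obtain ⟨-, rk, hrk⟩ := h
  induction hv : rk v using Nat.strong_induction_on generalizing v with
  | _ k hk => exact ih v fun w hw => hk (rk w) (hv ▸ rank_lt_of_transGen hrk hw) w rfl

theorem eq_of_anc_of_parent_eq_none {v y : ℕ} (hv : u.parent v = none) (h : u.Anc v y) :
    y = v := by
  rcases h.cases_head with rfl | ⟨c, hc, -⟩
  · rfl
  · exact absurd (hc.symm.trans hv) (by simp)

theorem anc_total_of_anc {v x y : ℕ} (hx : u.Anc v x) (hy : u.Anc v y) :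
    u.Anc x y ∨ u.Anc y x := by
  induction hx using Relation.ReflTransGen.head_induction_on with
  | refl => exact Or.inl hy
  | head hstep htail ih =>
    rcases hy.cases_head with rfl | ⟨w', hw', hy'⟩
    · exact Or.inr (Relation.ReflTransGen.head hstep htail)
    · exact ih (step_det hstep hw' ▸ hy')

theorem WF.exists_root (hwf : u.WF) (v : ℕ) : ∃ r, u.Anc v r ∧ u.parent r = none := by
  induction v using hwf.rootward_induction with
  | ih v ih =>
    cases hp : u.parent v with
    | none => exact ⟨v, ReflTransGen.refl, hp⟩
    | some w =>
      obtain ⟨r, hr, hroot⟩ := ih w (TransGen.single hp)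
      exact ⟨r, ReflTransGen.head hp hr, hroot⟩

/-! ### The recursions `nearestAnc` and `lastBefore` -/

/-- The fuel `u.verts.card` of `nearestAncAux` and `lastBeforeAux` suffices because it bounds the
number of strict ancestors of every vertex. -/
def strictAncs (u : PForest n) (v : ℕ) : Finset ℕ :=
  u.verts.filter fun x => TransGen u.Step v x

theorem card_strictAncs_le (v : ℕ) : (u.strictAncs v).card ≤ u.verts.card :=
  Finset.card_le_card (Finset.filter_subset _ _)

theorem WF.card_strictAncs_lt (h : u.WF) {v w : ℕ} (hs : u.Step v w) :
    (u.strictAncs w).card < (u.strictAncs v).card := by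
  refine Finset.card_lt_card ⟨fun x hx => ?_, fun hsub => ?_⟩
  · simp only [strictAncs, Finset.mem_filter] at hx ⊢
    exact ⟨hx.1, TransGen.head hs hx.2⟩
  · have hw : w ∈ u.strictAncs w :=
      hsub (Finset.mem_filter.2 ⟨(h.step_mem hs).2, TransGen.single hs⟩)
    exact h.not_transGen_self w (Finset.mem_filter.1 hw).2

theorem WF.parent_eq_none_of_card_strictAncs_eq_zero (h : u.WF) {v : ℕ}
    (h0 : (u.strictAncs v).card = 0) : u.parent v = none := by
  cases hp : u.parent v with
  | none => rfl
  | some w =>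
    have hw : w ∈ u.strictAncs v :=
      Finset.mem_filter.2 ⟨(h.step_mem hp).2, TransGen.single hp⟩
    simp [Finset.card_eq_zero.1 h0] at hw

/-- `x` is the last vertex on the path from `v` before the first vertex of `S` strictly below
`v` (or the root, if there is none). -/
def IsLastBefore (u : PForest n) (S : Finset ℕ) (v x : ℕ) : Prop :=
  u.Anc v x ∧ (∀ y w, u.Anc v y → TransGen u.Step y x → u.Step y w → w ∉ S) ∧
    ∀ w, u.Step x w → w ∈ S

theorem isLastBefore_self (hwf : u.WF) {v : ℕ} {S : Finset ℕ} (h : ∀ w, u.Step v w → w ∈ S) :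
    u.IsLastBefore S v v :=
  ⟨ReflTransGen.refl,
    fun _ _ hvy hyv _ => absurd (TransGen.trans_right hvy hyv) (hwf.not_transGen_self v), h⟩

theorem IsLastBefore.unique {S : Finset ℕ} {v x x' : ℕ}
    (h : u.IsLastBefore S v x) (h' : u.IsLastBefore S v x') : x = x' := by
  have key : ∀ a b, u.IsLastBefore S v a → u.IsLastBefore S v b → ¬ TransGen u.Step a b := by
    intro a b ha hb hab
    obtain ⟨c, hac, -⟩ := TransGen.head'_iff.1 hab
    exact hb.2.1 a c ha.1 hab hac (ha.2.2 c hac)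
  by_contra hne
  rcases anc_total_of_anc h.1 h'.1 with hc | hc
  · exact key _ _ h h' (transGen_of_anc_of_ne hc hne)
  · exact key _ _ h' h (transGen_of_anc_of_ne hc (Ne.symm hne))

theorem isLastBefore_lastBeforeAux (hwf : u.WF) (S : Finset ℕ) :
    ∀ (f v : ℕ), (u.strictAncs v).card ≤ f → u.IsLastBefore S v (u.lastBeforeAux S f v) := by
  intro f
  induction f with
  | zero =>
    intro v hv
    have hnone := hwf.parent_eq_none_of_card_strictAncs_eq_zero (Nat.le_zero.1 hv)
    exact isLastBefore_self hwf fun w hw => absurd (hw.symm.trans hnone) (by simp)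
  | succ f ih =>
    intro v hv
    simp only [lastBeforeAux]
    cases hp : u.parent v with
    | none => exact isLastBefore_self hwf fun w hw => absurd (hw.symm.trans hp) (by simp)
    | some w =>
      by_cases hwS : w ∈ S
      · simp only [hwS, if_true]
        exact isLastBefore_self hwf fun w' hw' => step_det hw' hp ▸ hwS
      · simp only [hwS, if_false]
        obtain ⟨h1, h2, h3⟩ := ih w (by have := hwf.card_strictAncs_lt hp; omega)
        refine ⟨ReflTransGen.head hp h1, fun y w' hvy hyx hyw' => ?_, h3⟩
        rcases hvy.cases_head with rfl | ⟨c, hc, hy'⟩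
        · exact step_det hyw' hp ▸ hwS
        · exact h2 y w' (step_det hc hp ▸ hy') hyx hyw'

theorem isLastBefore_lastBefore (hwf : u.WF) (S : Finset ℕ) (v : ℕ) :
    u.IsLastBefore S v (u.lastBefore S v) :=
  isLastBefore_lastBeforeAux hwf S _ v (card_strictAncs_le v)

theorem anc_lastBefore (hwf : u.WF) (S : Finset ℕ) (v : ℕ) : u.Anc v (u.lastBefore S v) :=
  (isLastBefore_lastBefore hwf S v).1

theorem lastBefore_eq_self (hwf : u.WF) {S : Finset ℕ} {x : ℕ} (h : ∀ w, u.Step x w → w ∈ S) :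
    u.lastBefore S x = x :=
  (isLastBefore_lastBefore hwf S x).unique (isLastBefore_self hwf h)

theorem nearestAncAux_eq_parent_lastBeforeAux (hwf : u.WF) (S : Finset ℕ) :
    ∀ (f v : ℕ), (u.strictAncs v).card ≤ f →
      u.nearestAncAux S f v = u.parent (u.lastBeforeAux S f v) := by
  intro f
  induction f with
  | zero =>
    intro v hv
    exact (hwf.parent_eq_none_of_card_strictAncs_eq_zero (Nat.le_zero.1 hv)).symm
  | succ f ih =>
    intro v hv
    simp only [nearestAncAux, lastBeforeAux]
    cases hp : u.parent v with
    | none => exact hp.symm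
    | some w =>
      by_cases hwS : w ∈ S
      · simp only [hwS, if_true]; exact hp.symm
      · simp only [hwS, if_false]
        exact ih w (by have := hwf.card_strictAncs_lt hp; omega)

theorem nearestAnc_eq_parent_lastBefore (hwf : u.WF) (S : Finset ℕ) (v : ℕ) :
    u.nearestAnc S v = u.parent (u.lastBefore S v) :=
  nearestAncAux_eq_parent_lastBeforeAux hwf S _ v (card_strictAncs_le v)

theorem nearestAnc_mem (hwf : u.WF) {S : Finset ℕ} {v w : ℕ}
    (h : u.nearestAnc S v = some w) : w ∈ S := by
  rw [nearestAnc_eq_parent_lastBefore hwf] at h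
  exact (isLastBefore_lastBefore hwf S v).2.2 w h

theorem transGen_of_nearestAnc_eq_some (hwf : u.WF) {S : Finset ℕ} {v w : ℕ}
    (h : u.nearestAnc S v = some w) : TransGen u.Step v w := by
  rw [nearestAnc_eq_parent_lastBefore hwf] at h
  exact TransGen.tail' (anc_lastBefore hwf S v) h

theorem notMem_of_between_lastBefore (hwf : u.WF) {S : Finset ℕ} {v z : ℕ}
    (hz : TransGen u.Step v z) (hzl : u.Anc z (u.lastBefore S v)) : z ∉ S := by
  obtain ⟨y, hvy, hstep⟩ := TransGen.tail'_iff.1 hz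
  exact (isLastBefore_lastBefore hwf S v).2.1 y z hvy (TransGen.head' hstep hzl) hstep

theorem anc_lastBefore_of_not_anc_parent (hwf : u.WF) {S : Finset ℕ} {v z : ℕ}
    (hvz : u.Anc v z) (hz : ∀ c, u.parent (u.lastBefore S v) = some c → ¬ u.Anc c z) :
    u.Anc z (u.lastBefore S v) := by
  rcases anc_total_of_anc hvz (anc_lastBefore hwf S v) with hc | hc
  · exact hc
  · rcases hc.cases_head with hc | ⟨c, hc1, hc2⟩
    · exact hc ▸ ReflTransGen.refl
    · exact absurd hc2 (hz c hc1)

theorem nearestAnc_eq_none_iff (hwf : u.WF) {S : Finset ℕ} {v : ℕ} :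
    u.nearestAnc S v = none ↔ ∀ x, TransGen u.Step v x → x ∉ S := by
  rw [nearestAnc_eq_parent_lastBefore hwf]
  constructor
  · intro h x hx
    exact notMem_of_between_lastBefore hwf hx
      (anc_lastBefore_of_not_anc_parent hwf hx.to_reflTransGen (by simp [h]))
  · intro h
    cases hp : u.parent (u.lastBefore S v) with
    | none => rfl
    | some w =>
      exact absurd ((isLastBefore_lastBefore hwf S v).2.2 w hp)
        (h w (TransGen.tail' (anc_lastBefore hwf S v) hp))

theorem nearestAnc_eq_some_iff (hwf : u.WF) {S : Finset ℕ} {v w : ℕ} :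
    u.nearestAnc S v = some w ↔
      TransGen u.Step v w ∧ w ∈ S ∧ ∀ z, TransGen u.Step v z → TransGen u.Step z w → z ∉ S := by
  constructor
  · intro h
    refine ⟨transGen_of_nearestAnc_eq_some hwf h, nearestAnc_mem hwf h, fun z hvz hzw => ?_⟩
    rw [nearestAnc_eq_parent_lastBefore hwf] at h
    refine notMem_of_between_lastBefore hwf hvz
      (anc_lastBefore_of_not_anc_parent hwf hvz.to_reflTransGen fun c hc hcz => ?_)
    rw [h] at hc
    cases hc
    exact hwf.not_transGen_self _ (TransGen.trans_right hcz hzw)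
  · rintro ⟨hvw, hwS, hmid⟩
    have hw_le : u.Anc w (u.lastBefore S v) → False := fun hwl =>
      notMem_of_between_lastBefore hwf hvw hwl hwS
    rw [nearestAnc_eq_parent_lastBefore hwf]
    cases hp : u.parent (u.lastBefore S v) with
    | none =>
      exact (hw_le (anc_lastBefore_of_not_anc_parent hwf hvw.to_reflTransGen (by simp [hp]))).elim
    | some c =>
      have hvc : TransGen u.Step v c := TransGen.tail' (anc_lastBefore hwf S v) hp
      by_contra hne
      rcases anc_total_of_anc hvw.to_reflTransGen hvc.to_reflTransGen with hc | hc
      · refine hw_le (anc_lastBefore_of_not_anc_parent hwf hvw.to_reflTransGen fun c' hc' hcw => ?_)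
        obtain rfl : c' = c := Option.some.inj (hc'.symm.trans hp)
        exact hne (congrArg some (hwf.anc_antisymm hcw hc))
      · exact hmid c hvc (transGen_of_anc_of_ne hc (fun h => hne (h ▸ rfl)))
          ((isLastBefore_lastBefore hwf S v).2.2 c hp)

/-! ### Induced subforests -/

theorem step_restrict_iff {S : Finset ℕ} {v w : ℕ} :
    (u.restrict S).Step v w ↔ v ∈ S ∩ u.verts ∧ u.nearestAnc S v = some w := by
  unfold Step restrict
  by_cases h : v ∈ S ∩ u.verts <;> simp [h]

theorem restrict_parent_of_mem {S : Finset ℕ} {v : ℕ} (hv : v ∈ S ∩ u.verts) :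
    (u.restrict S).parent v = u.nearestAnc S v :=
  if_pos hv

theorem WF.restrict (hwf : u.WF) (S : Finset ℕ) : (u.restrict S).WF := by
  refine ⟨fun v w h => ?_, ?_⟩
  · obtain ⟨hv, hw⟩ := step_restrict_iff.1 h
    exact ⟨hv, Finset.mem_inter.2 ⟨nearestAnc_mem hwf hw,
      hwf.transGen_mem (transGen_of_nearestAnc_eq_some hwf hw)⟩⟩
  · obtain ⟨rk, hrk⟩ := hwf.2
    exact ⟨rk, fun v w h => rank_lt_of_transGen hrk
      (transGen_of_nearestAnc_eq_some hwf (step_restrict_iff.1 h).2)⟩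

theorem restrict_transGen_iff (hwf : u.WF) {S : Finset ℕ} {v x : ℕ} :
    TransGen (u.restrict S).Step v x ↔ v ∈ S ∩ u.verts ∧ x ∈ S ∧ TransGen u.Step v x := by
  constructor
  · intro h
    induction h with
    | single h1 =>
      obtain ⟨hv, hna⟩ := step_restrict_iff.1 h1
      exact ⟨hv, nearestAnc_mem hwf hna, transGen_of_nearestAnc_eq_some hwf hna⟩
    | tail _ h1 ih =>
      obtain ⟨-, hna⟩ := step_restrict_iff.1 h1
      exact ⟨ih.1, nearestAnc_mem hwf hna, ih.2.2.trans (transGen_of_nearestAnc_eq_some hwf hna)⟩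
  · rintro ⟨hv, hx, hvx⟩
    induction v using hwf.rootward_induction with
    | ih v ih =>
      obtain ⟨w, hw⟩ := Option.ne_none_iff_exists'.1 fun hnone =>
        (nearestAnc_eq_none_iff hwf).1 hnone x hvx hx
      have hstep : (u.restrict S).Step v w := step_restrict_iff.2 ⟨hv, hw⟩
      obtain ⟨hvw, hwS, hmid⟩ := (nearestAnc_eq_some_iff hwf).1 hw
      by_cases hwx : w = x
      · exact hwx ▸ TransGen.single hstep
      have hwx' : TransGen u.Step w x := by
        rcases anc_total_of_anc hvw.to_reflTransGen hvx.to_reflTransGen with h | h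
        · exact transGen_of_anc_of_ne h hwx
        · exact absurd hx (hmid x hvx (transGen_of_anc_of_ne h (Ne.symm hwx)))
      exact TransGen.head hstep
        (ih w hvw (Finset.mem_inter.2 ⟨hwS, hwf.transGen_mem hvw⟩) hwx')

theorem anc_restrict_iff (hwf : u.WF) {S : Finset ℕ} {v x : ℕ} :
    (u.restrict S).Anc v x ↔ x = v ∨ (v ∈ S ∩ u.verts ∧ x ∈ S ∧ TransGen u.Step v x) := by
  rw [Anc, reflTransGen_iff_eq_or_transGen, restrict_transGen_iff hwf]

theorem anc_restrict_iff_of_mem (hwf : u.WF) {S : Finset ℕ} {v x : ℕ} (hv : v ∈ S ∩ u.verts)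
    (hx : x ∈ S) : (u.restrict S).Anc v x ↔ u.Anc v x := by
  rw [anc_restrict_iff hwf, Anc, reflTransGen_iff_eq_or_transGen]
  tauto

theorem nearestAnc_restrict (hwf : u.WF) {S D : Finset ℕ} (hDS : D ⊆ S) {v : ℕ}
    (hv : v ∈ S ∩ u.verts) : (u.restrict S).nearestAnc D v = u.nearestAnc D v := by
  refine Option.ext fun w => ?_
  simp only [nearestAnc_eq_some_iff (hwf.restrict S), nearestAnc_eq_some_iff hwf,
    restrict_transGen_iff hwf]
  constructor
  · rintro ⟨⟨-, -, h1⟩, h2, h3⟩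
    exact ⟨h1, h2, fun z hz1 hz2 hzD => h3 z ⟨hv, hDS hzD, hz1⟩
      ⟨Finset.mem_inter.2 ⟨hDS hzD, hwf.transGen_mem hz1⟩, hDS h2, hz2⟩ hzD⟩
  · rintro ⟨h1, h2, h3⟩
    exact ⟨⟨hv, hDS h2, h1⟩, h2, fun z hz1 hz2 => h3 z hz1.2.2 hz2.2.2⟩

theorem lastBefore_restrict_self (hwf : u.WF) (S : Finset ℕ) (v : ℕ) :
    (u.restrict S).lastBefore S v = v :=
  lastBefore_eq_self (hwf.restrict S) fun _ hw => nearestAnc_mem hwf (step_restrict_iff.1 hw).2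

theorem nearestAnc_verts (hwf : u.WF) (x : ℕ) : u.nearestAnc u.verts x = u.parent x := by
  rw [nearestAnc_eq_parent_lastBefore hwf, lastBefore_eq_self hwf fun w hw => (hwf.step_mem hw).2]

theorem lastBefore_verts (hwf : u.WF) (x : ℕ) : u.lastBefore u.verts x = x :=
  lastBefore_eq_self hwf fun _ hw => (hwf.step_mem hw).2

theorem lastBefore_lastBefore_restrict (hwf : u.WF) {S D : Finset ℕ} (hDS : D ⊆ S) {v : ℕ}
    (hv : v ∈ S ∩ u.verts) :
    u.lastBefore S ((u.restrict S).lastBefore D v) = u.lastBefore D v := by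
  obtain ⟨hc1, hc2, hc3⟩ := isLastBefore_lastBefore (hwf.restrict S) D v
  set c := (u.restrict S).lastBefore D v
  have hcS : c ∈ S ∩ u.verts := by
    rcases (anc_restrict_iff hwf).1 hc1 with h | ⟨-, h1, h2⟩
    · exact h ▸ hv
    · exact Finset.mem_inter.2 ⟨h1, hwf.transGen_mem h2⟩
  have hvc : u.Anc v c := (anc_restrict_iff_of_mem hwf hv (Finset.mem_inter.1 hcS).1).1 hc1
  obtain ⟨hx1, hx2, hx3⟩ := isLastBefore_lastBefore hwf S c
  refine ((isLastBefore_lastBefore hwf D v).unique ⟨hvc.trans hx1, ?_, fun w hw => ?_⟩).symm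
  · intro y w hvy hyx hyw hwD
    rcases anc_total_of_anc hvc hvy with hcy | hyc
    · exact hx2 y w hcy hyx hyw (hDS hwD)
    obtain rfl | hyc' := eq_or_ne y c
    · exact hx2 _ w ReflTransGen.refl hyx hyw (hDS hwD)
    have hvw : TransGen u.Step v w := TransGen.tail' hvy hyw
    have hwSV : w ∈ S ∩ u.verts := Finset.mem_inter.2 ⟨hDS hwD, hwf.transGen_mem hvw⟩
    have hwc : (u.restrict S).Anc w c := by
      obtain ⟨d, hd1, hd2⟩ := TransGen.head'_iff.1 (transGen_of_anc_of_ne hyc hyc')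
      exact (anc_restrict_iff_of_mem hwf hwSV (Finset.mem_inter.1 hcS).1).2 (step_det hyw hd1 ▸ hd2)
    obtain ⟨b, hb1, hb2⟩ := TransGen.tail'_iff.1 ((restrict_transGen_iff hwf).2 ⟨hv, hDS hwD, hvw⟩)
    exact hc2 b w hb1 (TransGen.head' hb2 hwc) hb2 hwD
  · exact hc3 w (step_restrict_iff.2 ⟨hcS, by rw [nearestAnc_eq_parent_lastBefore hwf]; exact hw⟩)

theorem pIso_of_eq {s t : PForest n} (hv : s.verts = t.verts)
    (hp : ∀ v ∈ s.verts, s.parent v = t.parent v)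
    (hc : ∀ v ∈ s.verts, (s.parent v).isSome → t.color v = s.color v) : s.PIso t :=
  ⟨⟨fun x => ⟨x.1, hv ▸ x.2⟩, fun y => ⟨y.1, hv.symm ▸ y.2⟩, fun _ => rfl, fun _ => rfl⟩,
    fun v w => by rw [hp v.1 v.2]; rfl, fun v hsome => hc v.1 v.2 hsome⟩

theorem restrict_restrict_pIso (hwf : u.WF) {S D : Finset ℕ} (hDS : D ⊆ S) :
    ((u.restrict S).restrict D).PIso (u.restrict D) := by
  have hverts : ((u.restrict S).restrict D).verts = (u.restrict D).verts := by
    show D ∩ (S ∩ u.verts) = D ∩ u.verts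
    rw [← Finset.inter_assoc, Finset.inter_eq_left.2 hDS]
  have hmem : ∀ v ∈ ((u.restrict S).restrict D).verts, v ∈ S ∩ u.verts := fun v hv =>
    (Finset.mem_inter.1 hv).2
  refine pIso_of_eq hverts (fun v hv => ?_) (fun v hv _ => ?_)
  · rw [restrict_parent_of_mem hv,
      restrict_parent_of_mem (show v ∈ (u.restrict D).verts from hverts ▸ hv),
      nearestAnc_restrict hwf hDS (hmem v hv)]
  · exact congrArg u.color (lastBefore_lastBefore_restrict hwf hDS (hmem v hv)).symm

theorem restrict_verts_pIso (hwf : u.WF) : (u.restrict u.verts).PIso u := by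
  have hverts : (u.restrict u.verts).verts = u.verts := Finset.inter_self _
  refine pIso_of_eq hverts (fun v hv => ?_) (fun v _ _ => ?_)
  · rw [restrict_parent_of_mem hv, nearestAnc_verts hwf]
  · exact congrArg u.color (lastBefore_verts hwf v).symm

/-! ### Roots and components -/

def AncClosed (u : PForest n) (C : Finset ℕ) : Prop :=
  ∀ v ∈ C, ∀ x, TransGen u.Step v x → x ∈ C

theorem mem_sroots {S : Finset ℕ} {r : ℕ} :
    r ∈ u.sroots S ↔ r ∈ S ∧ ∀ w ∈ S, u.Anc r w → w = r := by
  simp [sroots]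

theorem sroots_subset (S : Finset ℕ) : u.sroots S ⊆ S :=
  Finset.filter_subset _ _

theorem mem_compSet {S : Finset ℕ} {x r : ℕ} : x ∈ u.compSet S r ↔ x ∈ S ∧ u.Anc x r := by
  simp [compSet]

theorem compSet_subset (S : Finset ℕ) (r : ℕ) : u.compSet S r ⊆ S :=
  Finset.filter_subset _ _

theorem mem_compSet_self {S : Finset ℕ} {r : ℕ} (hr : r ∈ S) : r ∈ u.compSet S r :=
  mem_compSet.2 ⟨hr, ReflTransGen.refl⟩

theorem mem_sroots_verts_of_parent_eq_none {r : ℕ} (hrv : r ∈ u.verts)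
    (hr : u.parent r = none) : r ∈ u.sroots u.verts :=
  mem_sroots.2 ⟨hrv, fun _ _ hanc => eq_of_anc_of_parent_eq_none hr hanc⟩

theorem sroots_nonempty (hwf : u.WF) {S : Finset ℕ} (hS : S.Nonempty) : (u.sroots S).Nonempty := by
  obtain ⟨rk, hrk⟩ := hwf.2
  obtain ⟨r, hrS, hmin⟩ := Finset.exists_min_image S rk hS
  refine ⟨r, mem_sroots.2 ⟨hrS, fun w hwS hanc => ?_⟩⟩
  by_contra hne
  exact absurd (hmin w hwS)
    (not_le.2 (rank_lt_of_transGen hrk (transGen_of_anc_of_ne hanc (Ne.symm hne))))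

theorem ancClosed_compSet_of_parent_eq_none (hwf : u.WF) {r : ℕ} (hr : u.parent r = none) :
    u.AncClosed (u.compSet u.verts r) := by
  intro v hv x hx
  obtain ⟨-, hvr⟩ := mem_compSet.1 hv
  refine mem_compSet.2 ⟨hwf.transGen_mem hx, ?_⟩
  rcases anc_total_of_anc hx.to_reflTransGen hvr with hc | hc
  · exact hc
  · exact eq_of_anc_of_parent_eq_none hr hc ▸ ReflTransGen.refl

theorem ancClosed_verts_sdiff_compSet (hwf : u.WF) (r : ℕ) :
    u.AncClosed (u.verts \ u.compSet u.verts r) := by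
  intro v hv x hx
  rw [Finset.mem_sdiff] at hv ⊢
  exact ⟨hwf.transGen_mem hx, fun hxc =>
    hv.2 (mem_compSet.2 ⟨hv.1, hx.to_reflTransGen.trans (mem_compSet.1 hxc).2⟩)⟩

def Separated (u : PForest n) (A B : Finset ℕ) : Prop :=
  ∀ x y, u.Anc x y → (x ∈ A → y ∉ B) ∧ (x ∈ B → y ∉ A)

theorem Separated.symm {A B : Finset ℕ} (h : u.Separated A B) : u.Separated B A :=
  fun x y hxy => (h x y hxy).symm

theorem Separated.disjoint {A B : Finset ℕ} (h : u.Separated A B) : Disjoint A B :=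
  Finset.disjoint_left.2 fun x hxA hxB => (h x x ReflTransGen.refl).1 hxA hxB

theorem separated_of_ancClosed {C A B : Finset ℕ} (hCV : C ⊆ u.verts) (hC : u.AncClosed C)
    (hC' : u.AncClosed (u.verts \ C)) (hA : A ⊆ C) (hB : B ⊆ u.verts \ C) : u.Separated A B := by
  have key : ∀ x y, u.Anc x y → x ∈ u.verts → (y ∈ C ↔ x ∈ C) := by
    intro x y hxy hx
    obtain rfl | hne := eq_or_ne x y
    · rfl
    have hxy' := transGen_of_anc_of_ne hxy hne
    refine ⟨fun hy => ?_, fun hxC => hC x hxC y hxy'⟩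
    by_contra hxC
    exact (Finset.mem_sdiff.1 (hC' x (Finset.mem_sdiff.2 ⟨hx, hxC⟩) y hxy')).2 hy
  refine fun x y hxy => ⟨fun hxA hyB => ?_, fun hxB hyA => ?_⟩
  · exact (Finset.mem_sdiff.1 (hB hyB)).2 ((key x y hxy (hCV (hA hxA))).2 (hA hxA))
  · exact (Finset.mem_sdiff.1 (hB hxB)).2
      ((key x y hxy (Finset.mem_sdiff.1 (hB hxB)).1).1 (hA hyA))

theorem compSet_union_of_separated {A B : Finset ℕ} (h : u.Separated A B) {r : ℕ} (hr : r ∈ A) :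
    u.compSet (A ∪ B) r = u.compSet A r := by
  ext x
  simp only [mem_compSet, Finset.mem_union]
  exact ⟨fun ⟨hx, hxr⟩ => ⟨hx.resolve_right fun hxB => (h x r hxr).2 hxB hr, hxr⟩,
    fun ⟨hx, hxr⟩ => ⟨Or.inl hx, hxr⟩⟩

theorem sroots_union_of_separated {A B : Finset ℕ} (h : u.Separated A B) :
    u.sroots (A ∪ B) = u.sroots A ∪ u.sroots B := by
  ext r
  simp only [mem_sroots, Finset.mem_union]
  constructor
  · rintro ⟨hr | hr, hroot⟩
    exacts [Or.inl ⟨hr, fun w hw => hroot w (Or.inl hw)⟩,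
      Or.inr ⟨hr, fun w hw => hroot w (Or.inr hw)⟩]
  · rintro (⟨hr, hroot⟩ | ⟨hr, hroot⟩)
    · exact ⟨Or.inl hr, fun w hw hrw =>
        hroot w (hw.resolve_right ((h r w hrw).1 hr)) hrw⟩
    · exact ⟨Or.inr hr, fun w hw hrw =>
        hroot w (hw.resolve_left ((h r w hrw).2 hr)) hrw⟩

theorem restrict_compSet_isTree (hwf : u.WF) {S : Finset ℕ} (hS : S ⊆ u.verts) {r : ℕ}
    (hr : r ∈ u.sroots S) : (u.restrict (u.compSet S r)).IsTree := by
  obtain ⟨hrS, hroot⟩ := mem_sroots.1 hr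
  rw [IsTree, Finset.card_eq_one]
  refine ⟨r, Finset.eq_singleton_iff_unique_mem.2 ⟨?_, fun v hv => ?_⟩⟩
  · have hrC : r ∈ u.compSet S r ∩ u.verts := Finset.mem_inter.2 ⟨mem_compSet_self hrS, hS hrS⟩
    refine Finset.mem_filter.2 ⟨hrC, ?_⟩
    rw [restrict_parent_of_mem hrC, nearestAnc_eq_none_iff hwf]
    intro z hz hzC
    obtain rfl := hroot z (mem_compSet.1 hzC).1 hz.to_reflTransGen
    exact hwf.not_transGen_self z hz
  · obtain ⟨hvC, hp⟩ := Finset.mem_filter.1 hv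
    rw [restrict_parent_of_mem hvC, nearestAnc_eq_none_iff hwf] at hp
    by_contra hne
    exact hp r (transGen_of_anc_of_ne (mem_compSet.1 (Finset.mem_inter.1 hvC).1).2 hne)
      (mem_compSet_self hrS)

theorem sroots_restrict (hwf : u.WF) {S A : Finset ℕ} (hS : S ⊆ u.verts) (hA : A ⊆ S) :
    (u.restrict S).sroots A = u.sroots A := by
  ext r
  simp only [mem_sroots]
  refine and_congr_right fun hr => forall₂_congr fun w hw => ?_
  rw [anc_restrict_iff_of_mem hwf (Finset.mem_inter.2 ⟨hA hr, hS (hA hr)⟩) (hA hw)]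

theorem compSet_restrict (hwf : u.WF) {S A : Finset ℕ} (hS : S ⊆ u.verts) (hA : A ⊆ S) {r : ℕ}
    (hrA : r ∈ A) : (u.restrict S).compSet A r = u.compSet A r := by
  ext x
  simp only [mem_compSet]
  refine and_congr_right fun hx => ?_
  exact anc_restrict_iff_of_mem hwf (Finset.mem_inter.2 ⟨hA hx, hS (hA hx)⟩) (hA hrA)

/-! ### Edge counts and the coefficients `q` -/

/-- The ambient counterpart of `pcount`, with edges indexed by their upper vertex `x`. -/
def edgeCount (u : PForest n) (Q : Finset ℕ) (j : Fin n) (v : ℕ) : ℕ :=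
  (u.verts.filter fun x => u.Anc v x ∧ u.color x = j ∧ ∃ w, u.parent x = some w ∧ w ∈ Q).card

/-- `x ↦ lastBefore T x` matches the edges of the forest induced on `T` with the ambient edges
having the same lower vertex and the same color. -/
theorem pcount_eq_edgeCount (hwf : u.WF) {T : Finset ℕ} (hT : T ⊆ u.verts) (s : Finset ℕ)
    (j : Fin n) {v : ℕ} (hv : v ∈ T) : u.pcount T s j v = u.edgeCount (T \ s) j v := by
  obtain ⟨rk, hrk⟩ := hwf.2
  refine Finset.card_bij (fun x _ => u.lastBefore T x) (fun x hx => ?_)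
    (fun x1 hx1 x2 hx2 heq => ?_) (fun y hy => ?_)
  · obtain ⟨hxT, hanc, hcol, w, hna, hws⟩ := Finset.mem_filter.1 hx
    have hxlb := anc_lastBefore hwf T x
    refine Finset.mem_filter.2 ⟨hwf.anc_mem hxlb (hT hxT), hanc.trans hxlb, hcol, w, ?_,
      Finset.mem_sdiff.2 ⟨nearestAnc_mem hwf hna, hws⟩⟩
    rwa [← nearestAnc_eq_parent_lastBefore hwf]
  · obtain ⟨hx1T, hx1, -⟩ := Finset.mem_filter.1 hx1
    obtain ⟨hx2T, hx2, -⟩ := Finset.mem_filter.1 hx2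
    by_contra hne
    rcases anc_total_of_anc hx1 hx2 with hc | hc
    · exact notMem_of_between_lastBefore hwf (transGen_of_anc_of_ne hc hne)
        (heq ▸ anc_lastBefore hwf T x2) hx2T
    · exact notMem_of_between_lastBefore hwf (transGen_of_anc_of_ne hc (Ne.symm hne))
        (heq ▸ anc_lastBefore hwf T x1) hx1T
  · obtain ⟨-, hanc, hcol, w, hpw, hwQ⟩ := Finset.mem_filter.1 hy
    obtain ⟨hwT, hws⟩ := Finset.mem_sdiff.1 hwQ
    -- the preimage of `y` is the vertex of `T` on the path from `v` to `y` closest to `y`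
    obtain ⟨x, hxT, hxmin⟩ := Finset.exists_min_image
      (T.filter fun z => u.Anc v z ∧ u.Anc z y) rk
      ⟨v, Finset.mem_filter.2 ⟨hv, ReflTransGen.refl, hanc⟩⟩
    obtain ⟨hxT, hvx, hxy⟩ := Finset.mem_filter.1 hxT
    have hlb : u.lastBefore T x = y := by
      refine ((isLastBefore_lastBefore hwf T x).unique ⟨hxy, fun z w' hxz hzy hzw' hw'T => ?_,
        fun w' hw' => step_det hw' hpw ▸ hwT⟩)
      have hw'y : u.Anc w' y := by
        obtain ⟨d, hd1, hd2⟩ := TransGen.head'_iff.1 hzy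
        exact step_det hzw' hd1 ▸ hd2
      have := hxmin w' (Finset.mem_filter.2 ⟨hw'T, (hvx.trans hxz).tail hzw', hw'y⟩)
      have := hrk _ _ hzw'
      have := rank_le_of_anc hrk hxz
      omega
    refine ⟨x, Finset.mem_filter.2 ⟨hxT, hvx, hlb ▸ hcol, w, ?_, hws⟩, hlb⟩
    rw [nearestAnc_eq_parent_lastBefore hwf, hlb, hpw]

theorem edgeCount_union {Q₁ Q₂ : Finset ℕ} (h : Disjoint Q₁ Q₂) (j : Fin n) (v : ℕ) :
    u.edgeCount (Q₁ ∪ Q₂) j v = u.edgeCount Q₁ j v + u.edgeCount Q₂ j v := by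
  unfold edgeCount
  rw [← Finset.card_union_of_disjoint, ← Finset.filter_or]
  · congr 1
    ext x
    simp only [Finset.mem_filter, Finset.mem_union]
    constructor
    · rintro ⟨h1, h2, h3, w, h4, h5 | h5⟩
      · exact ⟨h1, Or.inl ⟨h2, h3, w, h4, h5⟩⟩
      · exact ⟨h1, Or.inr ⟨h2, h3, w, h4, h5⟩⟩
    · rintro ⟨h1, ⟨h2, h3, w, h4, h5⟩ | ⟨h2, h3, w, h4, h5⟩⟩
      · exact ⟨h1, h2, h3, w, h4, Or.inl h5⟩
      · exact ⟨h1, h2, h3, w, h4, Or.inr h5⟩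
  · refine Finset.disjoint_filter.2 fun x _ ⟨_, _, w₁, hw₁, hq₁⟩ ⟨_, _, w₂, hw₂, hq₂⟩ => ?_
    cases hw₁.symm.trans hw₂
    exact Finset.disjoint_left.1 h hq₁ hq₂

/-- Along the path from a vertex of an ancestor-closed set `C`, every lower vertex lies in `C`. -/
theorem edgeCount_inter_of_ancClosed {C : Finset ℕ} (hC : u.AncClosed C) (Q : Finset ℕ)
    (j : Fin n) {v : ℕ} (hv : v ∈ C) : u.edgeCount (Q ∩ C) j v = u.edgeCount Q j v := by
  unfold edgeCount
  congr 1
  refine Finset.filter_congr fun x _ => and_congr_right fun hvx => and_congr_right fun _ =>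
    exists_congr fun w => and_congr_right fun hxw => ?_
  simp [Finset.mem_inter, hC v hv w (TransGen.tail' hvx hxw)]

theorem pcount_restrict (hwf : u.WF) {S : Finset ℕ} (hS : S ⊆ u.verts) (s : Finset ℕ) (j : Fin n)
    {v : ℕ} (hv : v ∈ S) : (u.restrict S).pcount S s j v = u.pcount S s j v := by
  unfold pcount
  congr 1
  refine Finset.filter_congr fun x hx => ?_
  have hx' : x ∈ S ∩ u.verts := Finset.mem_inter.2 ⟨hx, hS hx⟩
  rw [anc_restrict_iff_of_mem hwf (Finset.mem_inter.2 ⟨hv, hS hv⟩) hx,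
    lastBefore_restrict_self hwf, nearestAnc_restrict hwf le_rfl hx']
  rfl

theorem pcount_self (hwf : u.WF) (T : Finset ℕ) (j : Fin n) (v : ℕ) : u.pcount T T j v = 0 := by
  rw [pcount, Finset.card_eq_zero, Finset.filter_eq_empty_iff]
  rintro x - ⟨-, -, w, hna, hw⟩
  exact hw (nearestAnc_mem hwf hna)

end PForest

section Coefficients

open PForest

variable {K : Type*} [Field K] {n : ℕ} (q1 q2 : Fin n → K)

def qweight (a b : Fin n → ℕ) : K := (∏ j, q1 j ^ a j) * ∏ j, q2 j ^ b j

theorem qweight_mul_qweight (a b c d : Fin n → ℕ) :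
    qweight q1 q2 a b * qweight q1 q2 c d = qweight q1 q2 (a + c) (b + d) := by
  simp only [qweight, Pi.add_apply, pow_add, Finset.prod_mul_distrib]
  ring

variable {u : PForest n}

theorem qcoef_eq_qweight (hwf : u.WF) {T s : Finset ℕ} (hT : T ⊆ u.verts) (hs : s ⊆ T) :
    qcoef K q1 q2 u T s = qweight q1 q2 (fun j => ∑ v ∈ s, u.edgeCount (T \ s) j v)
      (fun j => ∑ v ∈ T \ s, u.edgeCount s j v) := by
  unfold qcoef qweight
  congr 1 <;> refine Finset.prod_congr rfl fun j _ =>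
    congrArg _ (Finset.sum_congr rfl fun v hv => ?_)
  · exact pcount_eq_edgeCount hwf hT s j (hs hv)
  · rw [pcount_eq_edgeCount hwf hT _ j (Finset.mem_sdiff.1 hv).1, sdiff_sdiff_eq_self hs]

theorem qcoef_empty (hwf : u.WF) (T : Finset ℕ) : qcoef K q1 q2 u T ∅ = 1 := by
  simp [qcoef, pcount_self hwf]

theorem qcoef_self (hwf : u.WF) (T : Finset ℕ) : qcoef K q1 q2 u T T = 1 := by
  simp [qcoef, pcount_self hwf]

theorem qcoef_restrict (hwf : u.WF) {S A : Finset ℕ} (hS : S ⊆ u.verts) (hA : A ⊆ S) :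
    qcoef K q1 q2 (u.restrict S) S A = qcoef K q1 q2 u S A := by
  unfold qcoef
  congr 1 <;> refine Finset.prod_congr rfl fun j _ =>
    congrArg _ (Finset.sum_congr rfl fun v hv => ?_)
  · exact pcount_restrict hwf hS _ j (hA hv)
  · exact pcount_restrict hwf hS _ j (Finset.mem_sdiff.1 hv).1

theorem qcoef_mul_qcoef_of_subset (hwf : u.WF) {A S : Finset ℕ} (hA : A ⊆ S) (hS : S ⊆ u.verts) :
    qcoef K q1 q2 u u.verts S * qcoef K q1 q2 u S A =
      qcoef K q1 q2 u u.verts A * qcoef K q1 q2 u (u.verts \ A) (S \ A) := by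
  rw [qcoef_eq_qweight q1 q2 hwf le_rfl hS, qcoef_eq_qweight q1 q2 hwf hS hA,
    qcoef_eq_qweight q1 q2 hwf le_rfl (hA.trans hS),
    qcoef_eq_qweight q1 q2 hwf Finset.sdiff_subset (Finset.sdiff_subset_sdiff hS le_rfl),
    qweight_mul_qweight, qweight_mul_qweight, sdiff_sdiff_sdiff_cancel_right hA]
  have hVA : u.verts \ A = u.verts \ S ∪ S \ A := (Finset.sdiff_union_sdiff_cancel hS hA).symm
  have hdisj : Disjoint (u.verts \ S) (S \ A) :=
    Finset.disjoint_of_subset_right Finset.sdiff_subset Finset.sdiff_disjoint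
  congr 1 <;> funext j <;> simp only [Pi.add_apply]
  · rw [hVA, ← Finset.sum_sdiff hA]
    simp only [edgeCount_union hdisj, Finset.sum_add_distrib]
    ring
  · have hsplit : ∀ v, u.edgeCount S j v = u.edgeCount A j v + u.edgeCount (S \ A) j v :=
      fun v => by rw [← edgeCount_union Finset.disjoint_sdiff, Finset.union_sdiff_of_subset hA]
    rw [hVA, Finset.sum_union hdisj]
    simp only [hsplit, Finset.sum_add_distrib]
    ring

theorem qcoef_mul_qcoef_of_ancClosed (hwf : u.WF) {C A B : Finset ℕ} (hCV : C ⊆ u.verts)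
    (hC : u.AncClosed C) (hC' : u.AncClosed (u.verts \ C)) (hA : A ⊆ C) (hB : B ⊆ u.verts \ C) :
    qcoef K q1 q2 u C A * qcoef K q1 q2 u (u.verts \ C) B = qcoef K q1 q2 u u.verts (A ∪ B) := by
  have hmem : ∀ x, (x ∈ A → x ∈ C) ∧ (x ∈ B → x ∈ u.verts ∧ x ∉ C) ∧ (x ∈ C → x ∈ u.verts) :=
    fun x => ⟨@hA x, fun h => Finset.mem_sdiff.1 (hB h), @hCV x⟩
  have hAB : Disjoint A B := Finset.disjoint_left.2 fun x hxA hxB => ((hmem x).2.1 hxB).2 (hA hxA)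
  have hrest : Disjoint (C \ A) ((u.verts \ C) \ B) :=
    Finset.disjoint_left.2 fun x h1 h2 => (Finset.mem_sdiff.1 (Finset.mem_sdiff.1 h2).1).2
      (Finset.mem_sdiff.1 h1).1
  have e1 : (u.verts \ (A ∪ B)) ∩ C = C \ A := by
    ext x; have := hmem x; simp only [Finset.mem_inter, Finset.mem_sdiff, Finset.mem_union]; tauto
  have e2 : (u.verts \ (A ∪ B)) ∩ (u.verts \ C) = (u.verts \ C) \ B := by
    ext x; have := hmem x; simp only [Finset.mem_inter, Finset.mem_sdiff, Finset.mem_union]; tauto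
  have e3 : u.verts \ (A ∪ B) = C \ A ∪ (u.verts \ C) \ B := by
    ext x; have := hmem x; simp only [Finset.mem_sdiff, Finset.mem_union]; tauto
  have e4 : (A ∪ B) ∩ C = A := by
    ext x; have := hmem x; simp only [Finset.mem_inter, Finset.mem_union]; tauto
  have e5 : (A ∪ B) ∩ (u.verts \ C) = B := by
    ext x; have := hmem x; simp only [Finset.mem_inter, Finset.mem_sdiff, Finset.mem_union]; tauto
  rw [qcoef_eq_qweight q1 q2 hwf hCV hA, qcoef_eq_qweight q1 q2 hwf Finset.sdiff_subset hB,
    qcoef_eq_qweight q1 q2 hwf le_rfl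
      (Finset.union_subset (hA.trans hCV) (hB.trans Finset.sdiff_subset)),
    qweight_mul_qweight]
  congr 1 <;> funext j <;> simp only [Pi.add_apply]
  · rw [Finset.sum_union hAB]
    congr 1 <;> refine Finset.sum_congr rfl fun v hv => ?_
    · rw [← e1, edgeCount_inter_of_ancClosed hC _ j (hA hv)]
    · rw [← e2, edgeCount_inter_of_ancClosed hC' _ j (hB hv)]
  · rw [e3, Finset.sum_union hrest]
    congr 1 <;> refine Finset.sum_congr rfl fun v hv => ?_
    · rw [← edgeCount_inter_of_ancClosed hC (A ∪ B) j (Finset.mem_sdiff.1 hv).1, e4]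
    · rw [← edgeCount_inter_of_ancClosed hC' (A ∪ B) j (Finset.mem_sdiff.1 hv).1, e5]

end Coefficients

/-! ### Forest monomials -/

section Monomials

open PForest

variable (K : Type*) [Field K] {n : ℕ} [NeZero n] {u : PForest n}

theorem mkClass_eq_of_pIso {t₁ t₂ : PForest n} (h₁ : t₁.WF ∧ t₁.IsTree) (h₂ : t₂.WF ∧ t₂.IsTree)
    (h : t₁.PIso t₂) : mkClass t₁ = mkClass t₂ := by
  unfold mkClass
  exact (dif_pos h₁).trans ((Quot.sound (r := fun a b : TreeObj n => PIso a.1 b.1)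
    (a := ⟨t₁, h₁⟩) (b := ⟨t₂, h₂⟩) h).trans (Eq.symm (dif_pos h₂)))

theorem forestMonomial_empty (u : PForest n) : forestMonomial K u ∅ = 1 := by
  simp [forestMonomial, sroots]

theorem forestMonomial_restrict (hwf : u.WF) {S A : Finset ℕ} (hS : S ⊆ u.verts) (hA : A ⊆ S) :
    forestMonomial K (u.restrict S) A = forestMonomial K u A := by
  unfold forestMonomial
  rw [sroots_restrict hwf hS hA]
  refine Finset.prod_congr rfl fun r hr => ?_
  have hrA : r ∈ A := (mem_sroots.1 hr).1
  have hAS : A ⊆ (u.restrict S).verts := fun x hx => Finset.mem_inter.2 ⟨hA hx, hS (hA hx)⟩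
  have htree := restrict_compSet_isTree (hwf.restrict S) hAS (sroots_restrict hwf hS hA ▸ hr)
  rw [compSet_restrict hwf hS hA hrA] at htree ⊢
  exact congrArg _ (mkClass_eq_of_pIso ⟨(hwf.restrict S).restrict _, htree⟩
    ⟨hwf.restrict _, restrict_compSet_isTree hwf (hA.trans hS) hr⟩
    (restrict_restrict_pIso hwf ((compSet_subset A r).trans hA)))

theorem forestMonomial_union {A B : Finset ℕ} (h : u.Separated A B) :
    forestMonomial K u (A ∪ B) = forestMonomial K u A * forestMonomial K u B := by
  unfold forestMonomial
  rw [sroots_union_of_separated h, Finset.prod_union (Finset.disjoint_of_subset_left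
    (sroots_subset A) (Finset.disjoint_of_subset_right (sroots_subset B) h.disjoint))]
  congr 1 <;> refine Finset.prod_congr rfl fun r hr => ?_
  · rw [compSet_union_of_separated h (mem_sroots.1 hr).1]
  · rw [Finset.union_comm, compSet_union_of_separated h.symm (mem_sroots.1 hr).1]

theorem forestMonomial_compSet {r : ℕ} (hrv : r ∈ u.verts) (hr : u.parent r = none) :
    forestMonomial K u (u.compSet u.verts r) =
      MvPolynomial.X (mkClass (u.restrict (u.compSet u.verts r))) := by
  have hsr : u.sroots (u.compSet u.verts r) = {r} := by
    refine Finset.eq_singleton_iff_unique_mem.2 ⟨mem_sroots.2 ⟨mem_compSet_self hrv,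
      fun _ _ hanc => eq_of_anc_of_parent_eq_none hr hanc⟩, fun x hx => ?_⟩
    obtain ⟨hxC, hroot⟩ := mem_sroots.1 hx
    exact (hroot r (mem_compSet_self hrv) (mem_compSet.1 hxC).2).symm
  have hcomp : u.compSet (u.compSet u.verts r) r = u.compSet u.verts r :=
    Finset.filter_true_of_mem fun x hx => (mem_compSet.1 hx).2
  rw [forestMonomial, hsr, Finset.prod_singleton, hcomp]

theorem forestMonomial_verts_of_isTree {t : PForest n} (ht : t.WF ∧ t.IsTree) :
    forestMonomial K t t.verts = MvPolynomial.X (mkClass t) := by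
  obtain ⟨hwf, htree⟩ := ht
  obtain ⟨r, hr⟩ := Finset.card_eq_one.1 htree
  have hroot : ∀ x ∈ t.verts, t.parent x = none → x = r := fun x hx hpx =>
    Finset.mem_singleton.1 (hr ▸ Finset.mem_filter.2 ⟨hx, hpx⟩)
  obtain ⟨hrv, hpr⟩ := Finset.mem_filter.1 (hr ▸ Finset.mem_singleton_self r)
  have hcomp : t.compSet t.verts r = t.verts := Finset.filter_true_of_mem fun x hx => by
    obtain ⟨r', hxr', hpr'⟩ := hwf.exists_root x
    exact hroot r' (hwf.anc_mem hxr' hx) hpr' ▸ hxr'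
  have htree' : (t.restrict t.verts).IsTree := hcomp ▸
    restrict_compSet_isTree hwf le_rfl (mem_sroots_verts_of_parent_eq_none hrv hpr)
  conv_lhs => rw [← hcomp]
  rw [forestMonomial_compSet K hrv hpr, hcomp,
    mkClass_eq_of_pIso ⟨hwf.restrict _, htree'⟩ ⟨hwf, htree⟩ (restrict_verts_pIso hwf)]

end Monomials

/-! ### Invariance under isomorphism -/

namespace PForest

variable {n : ℕ}

/-- The isomorphisms of `PIso`, extended to maps `ℕ → ℕ` so that they act on sets of vertices
by `Finset.image`. -/
structure FIso (s t : PForest n) (f g : ℕ → ℕ) : Prop where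
  mapsTo : ∀ v ∈ s.verts, f v ∈ t.verts
  mapsTo' : ∀ w ∈ t.verts, g w ∈ s.verts
  left_inv : ∀ v ∈ s.verts, g (f v) = v
  right_inv : ∀ w ∈ t.verts, f (g w) = w
  step : ∀ v w, s.Step v w → t.Step (f v) (f w)
  step' : ∀ v w, t.Step v w → s.Step (g v) (g w)
  color_eq : ∀ v ∈ s.verts, (s.parent v).isSome → t.color (f v) = s.color v

variable {s t : PForest n} {f g : ℕ → ℕ}

theorem FIso.symm (h : FIso s t f g) : FIso t s g f := by
  refine ⟨h.mapsTo', h.mapsTo, h.right_inv, h.left_inv, h.step', h.step, fun w hw hsome => ?_⟩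
  obtain ⟨y, hy⟩ := Option.isSome_iff_exists.1 hsome
  have := h.color_eq (g w) (h.mapsTo' w hw) (Option.isSome_iff_exists.2 ⟨g y, h.step' w y hy⟩)
  rw [h.right_inv w hw] at this
  exact this.symm

theorem PIso.exists_fIso (hp : s.PIso t) (hs : s.WF) (ht : t.WF) : ∃ f g, FIso s t f g := by
  obtain ⟨e, he1, he2⟩ := hp
  refine ⟨fun v => if h : v ∈ s.verts then e ⟨v, h⟩ else v,
    fun w => if h : w ∈ t.verts then e.symm ⟨w, h⟩ else w,
    fun v hv => by simp [dif_pos hv], fun w hw => by simp [dif_pos hw],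
    fun v hv => by simp [dif_pos hv], fun w hw => by simp [dif_pos hw],
    fun v w hvw => ?_, fun v w hvw => ?_,
    fun v hv hsome => by simpa [dif_pos hv] using he2 ⟨v, hv⟩ hsome⟩
  · obtain ⟨hv, hw⟩ := hs.1 v w hvw
    simpa [Step, dif_pos hv, dif_pos hw] using (he1 ⟨v, hv⟩ ⟨w, hw⟩).1 hvw
  · obtain ⟨hv, hw⟩ := ht.1 v w hvw
    simpa [Step, dif_pos hv, dif_pos hw] using
      (he1 (e.symm ⟨v, hv⟩) (e.symm ⟨w, hw⟩)).2 (by simpa [Step] using hvw)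

theorem FIso.injOn (h : FIso s t f g) : Set.InjOn f s.verts := fun x hx y hy hxy => by
  rw [← h.left_inv x hx, hxy, h.left_inv y hy]

theorem FIso.transGen (h : FIso s t f g) {v w : ℕ} (hvw : TransGen s.Step v w) :
    TransGen t.Step (f v) (f w) :=
  hvw.lift f h.step

theorem FIso.anc (h : FIso s t f g) {v w : ℕ} (hvw : s.Anc v w) : t.Anc (f v) (f w) :=
  hvw.lift f h.step

theorem FIso.transGen_iff (h : FIso s t f g) {v w : ℕ} (hv : v ∈ s.verts) (hw : w ∈ s.verts) :
    TransGen t.Step (f v) (f w) ↔ TransGen s.Step v w :=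
  ⟨fun h' => by simpa [h.left_inv v hv, h.left_inv w hw] using h.symm.transGen h', h.transGen⟩

theorem FIso.anc_iff (h : FIso s t f g) {v w : ℕ} (hv : v ∈ s.verts) (hw : w ∈ s.verts) :
    t.Anc (f v) (f w) ↔ s.Anc v w :=
  ⟨fun h' => by simpa [h.left_inv v hv, h.left_inv w hw] using h.symm.anc h', h.anc⟩

theorem FIso.mem_image_iff (h : FIso s t f g) {S : Finset ℕ} (hS : S ⊆ s.verts) {v : ℕ}
    (hv : v ∈ s.verts) : f v ∈ S.image f ↔ v ∈ S := by
  simpa using h.injOn.mem_image_iff (s₁ := (S : Set ℕ)) hS hv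

theorem FIso.image_verts (h : FIso s t f g) : s.verts.image f = t.verts := by
  ext x
  refine ⟨fun hx => ?_, fun hx => ?_⟩
  · obtain ⟨v, hv, rfl⟩ := Finset.mem_image.1 hx
    exact h.mapsTo v hv
  · exact h.right_inv x hx ▸ Finset.mem_image_of_mem f (h.mapsTo' x hx)

theorem FIso.image_subset (h : FIso s t f g) {S : Finset ℕ} (hS : S ⊆ s.verts) :
    S.image f ⊆ t.verts :=
  h.image_verts ▸ Finset.image_subset_image hS

theorem FIso.exists_eq (h : FIso s t f g) {y : ℕ} (hy : y ∈ t.verts) :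
    ∃ v ∈ s.verts, f v = y :=
  ⟨g y, h.mapsTo' y hy, h.right_inv y hy⟩

theorem FIso.nearestAnc_image (hs : s.WF) (ht : t.WF) (h : FIso s t f g) {S : Finset ℕ}
    (hS : S ⊆ s.verts) {v : ℕ} (hv : v ∈ s.verts) :
    t.nearestAnc (S.image f) (f v) = Option.map f (s.nearestAnc S v) := by
  cases hna : s.nearestAnc S v with
  | none =>
    refine (nearestAnc_eq_none_iff ht).2 fun y hy hyS => ?_
    obtain ⟨x, hx, rfl⟩ := h.exists_eq (ht.transGen_mem hy)
    exact (nearestAnc_eq_none_iff hs).1 hna x ((h.transGen_iff hv hx).1 hy)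
      ((h.mem_image_iff hS hx).1 hyS)
  | some w =>
    obtain ⟨h1, h2, h3⟩ := (nearestAnc_eq_some_iff hs).1 hna
    refine (nearestAnc_eq_some_iff ht).2 ⟨h.transGen h1, Finset.mem_image_of_mem f h2,
      fun y hy1 hy2 hyS => ?_⟩
    obtain ⟨x, hx, rfl⟩ := h.exists_eq (ht.transGen_mem hy1)
    exact h3 x ((h.transGen_iff hv hx).1 hy1) ((h.transGen_iff hx (hS h2)).1 hy2)
      ((h.mem_image_iff hS hx).1 hyS)

theorem FIso.lastBefore_image (hs : s.WF) (ht : t.WF) (h : FIso s t f g) {S : Finset ℕ}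
    (hS : S ⊆ s.verts) {v : ℕ} (hv : v ∈ s.verts) :
    t.lastBefore (S.image f) (f v) = f (s.lastBefore S v) := by
  obtain ⟨h1, h2, h3⟩ := isLastBefore_lastBefore hs S v
  have hlv : s.lastBefore S v ∈ s.verts := hs.anc_mem h1 hv
  refine (isLastBefore_lastBefore ht _ (f v)).unique ⟨h.anc h1, fun y w hy hyx hyw hwS => ?_,
    fun w hw => ?_⟩
  · obtain ⟨x, hx, rfl⟩ := h.exists_eq (ht.anc_mem hy (h.mapsTo v hv))
    obtain ⟨z, hz, rfl⟩ := h.exists_eq (ht.step_mem hyw).2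
    exact h2 x z ((h.anc_iff hv hx).1 hy) ((h.transGen_iff hx hlv).1 hyx)
      (by simpa [h.left_inv x hx, h.left_inv z hz] using h.step' _ _ hyw)
      ((h.mem_image_iff hS hz).1 hwS)
  · obtain ⟨z, hz, rfl⟩ := h.exists_eq (ht.step_mem hw).2
    exact (h.mem_image_iff hS hz).2
      (h3 z (by simpa [h.left_inv _ hlv, h.left_inv z hz] using h.step' _ _ hw))

theorem FIso.color_lastBefore_image (hs : s.WF) (ht : t.WF) (h : FIso s t f g) {S : Finset ℕ}
    (hS : S ⊆ s.verts) {x : ℕ} (hx : x ∈ s.verts) (hna : (s.nearestAnc S x).isSome) :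
    t.color (t.lastBefore (S.image f) (f x)) = s.color (s.lastBefore S x) := by
  rw [h.lastBefore_image hs ht hS hx]
  exact h.color_eq _ (hs.anc_mem (anc_lastBefore hs S x) hx)
    (nearestAnc_eq_parent_lastBefore hs S x ▸ hna)

theorem FIso.pcount_image (hs : s.WF) (ht : t.WF) (h : FIso s t f g) {S A : Finset ℕ}
    (hS : S ⊆ s.verts) (hA : A ⊆ s.verts) (j : Fin n) {v : ℕ} (hv : v ∈ s.verts) :
    t.pcount (S.image f) (A.image f) j (f v) = s.pcount S A j v := by
  unfold pcount
  rw [Finset.filter_image,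
    Finset.card_image_of_injOn (h.injOn.mono fun x hx => hS (Finset.mem_filter.1 hx).1)]
  congr 1
  refine Finset.filter_congr fun x hx => ?_
  have hxv := hS hx
  rw [h.anc_iff hv hxv, h.nearestAnc_image hs ht hS hxv]
  refine and_congr_right fun _ => ?_
  cases hna : s.nearestAnc S x with
  | none => simp
  | some w =>
    have hwv : w ∈ s.verts := hS (nearestAnc_mem hs hna)
    rw [h.color_lastBefore_image hs ht hS hxv (by simp [hna])]
    simp only [Option.map_some, Option.some.injEq, exists_eq_left', h.mem_image_iff hA hwv]

theorem FIso.sroots_image (h : FIso s t f g) {S : Finset ℕ}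
    (hS : S ⊆ s.verts) : t.sroots (S.image f) = (s.sroots S).image f := by
  unfold sroots
  rw [Finset.filter_image]
  congr 1
  refine Finset.filter_congr fun r hr => ?_
  simp only [Finset.forall_mem_image]
  refine forall₂_congr fun w hw => ?_
  rw [h.anc_iff (hS hr) (hS hw)]
  exact imp_congr_right fun _ => ⟨fun e => h.injOn (hS hw) (hS hr) e, congrArg f⟩

theorem FIso.compSet_image (h : FIso s t f g) {S : Finset ℕ}
    (hS : S ⊆ s.verts) {r : ℕ} (hr : r ∈ s.verts) :
    t.compSet (S.image f) (f r) = (s.compSet S r).image f := by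
  unfold compSet
  rw [Finset.filter_image]
  exact congrArg _ (Finset.filter_congr fun x hx => h.anc_iff (hS hx) hr)

theorem FIso.restrict_pIso (hs : s.WF) (ht : t.WF) (h : FIso s t f g) {D : Finset ℕ}
    (hD : D ⊆ s.verts) : (s.restrict D).PIso (t.restrict (D.image f)) := by
  have hfD : ∀ x ∈ D ∩ s.verts, f x ∈ D.image f ∩ t.verts := fun x hx =>
    Finset.mem_inter.2 ⟨Finset.mem_image_of_mem f (Finset.mem_inter.1 hx).1,
      h.mapsTo x (Finset.mem_inter.1 hx).2⟩
  have hgD : ∀ y ∈ D.image f ∩ t.verts, g y ∈ D ∩ s.verts := fun y hy => by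
    obtain ⟨x, hx, rfl⟩ := h.exists_eq (Finset.mem_inter.1 hy).2
    rw [h.left_inv x hx]
    exact Finset.mem_inter.2 ⟨(h.mem_image_iff hD hx).1 (Finset.mem_inter.1 hy).1, hx⟩
  refine ⟨⟨fun x => ⟨f x, hfD x x.2⟩, fun y => ⟨g y, hgD y y.2⟩,
    fun x => Subtype.ext (h.left_inv x (Finset.mem_inter.1 x.2).2),
    fun y => Subtype.ext (h.right_inv y (Finset.mem_inter.1 y.2).2)⟩,
    fun v w => ?_, fun v hsome => ?_⟩
  · have hvv := (Finset.mem_inter.1 v.2).2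
    show (s.restrict D).parent (v : ℕ) = some (w : ℕ) ↔
      (t.restrict (D.image f)).parent (f v) = some (f w)
    rw [restrict_parent_of_mem v.2, restrict_parent_of_mem (hfD v v.2),
      h.nearestAnc_image hs ht hD hvv]
    cases hna : s.nearestAnc D v with
    | none => simp
    | some w₀ =>
      simp only [Option.map_some, Option.some.injEq]
      exact ⟨congrArg f, h.injOn (hD (nearestAnc_mem hs hna)) (Finset.mem_inter.1 w.2).2⟩
  · rw [restrict_parent_of_mem v.2] at hsome
    exact h.color_lastBefore_image hs ht hD (Finset.mem_inter.1 v.2).2 hsome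

end PForest

section Invariance

open PForest

variable (K : Type*) [Field K] {n : ℕ} (q1 q2 : Fin n → K) {s t : PForest n} {f g : ℕ → ℕ}

theorem PForest.FIso.qcoef_image (hs : s.WF) (ht : t.WF) (h : FIso s t f g) {S A : Finset ℕ}
    (hS : S ⊆ s.verts) (hA : A ⊆ S) :
    qcoef K q1 q2 t (S.image f) (A.image f) = qcoef K q1 q2 s S A := by
  have hinj : Set.InjOn f S := h.injOn.mono hS
  unfold qcoef
  rw [← Finset.image_sdiff_of_injOn hinj hA]
  congr 1 <;> refine Finset.prod_congr rfl fun j _ => congrArg _ ?_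
  · rw [Finset.sum_image (hinj.mono hA)]
    refine Finset.sum_congr rfl fun v hv => ?_
    exact h.pcount_image hs ht hS (hA.trans hS) j (hS (hA hv))
  · rw [Finset.sum_image (hinj.mono Finset.sdiff_subset)]
    refine Finset.sum_congr rfl fun v hv => ?_
    exact h.pcount_image hs ht hS (Finset.sdiff_subset.trans hS) j (hS (Finset.mem_sdiff.1 hv).1)

variable [NeZero n]

theorem PForest.FIso.forestMonomial_image (hs : s.WF) (ht : t.WF) (h : FIso s t f g) {S : Finset ℕ}
    (hS : S ⊆ s.verts) : forestMonomial K t (S.image f) = forestMonomial K s S := by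
  unfold forestMonomial
  rw [h.sroots_image hS, Finset.prod_image (h.injOn.mono fun r hr => hS (mem_sroots.1 hr).1)]
  refine Finset.prod_congr rfl fun r hr => ?_
  have hrv : r ∈ s.verts := hS (mem_sroots.1 hr).1
  have htree := restrict_compSet_isTree ht (h.image_subset hS)
    (h.sroots_image hS ▸ Finset.mem_image_of_mem f hr)
  rw [h.compSet_image hS hrv] at htree ⊢
  exact congrArg _ (mkClass_eq_of_pIso ⟨hs.restrict _, restrict_compSet_isTree hs hS hr⟩
    ⟨ht.restrict _, htree⟩ (h.restrict_pIso hs ht ((compSet_subset S r).trans hS))).symm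

theorem PForest.FIso.subforestSum_eq (hs : s.WF) (ht : t.WF) (h : FIso s t f g) :
    subforestSum K q1 q2 t = subforestSum K q1 q2 s := by
  unfold subforestSum
  rw [← h.image_verts, Finset.powerset_image,
    Finset.sum_image (Finset.image_injOn_powerset_of_injOn h.injOn)]
  refine Finset.sum_congr rfl fun S hS => ?_
  rw [Finset.mem_powerset] at hS
  rw [← Finset.image_sdiff_of_injOn h.injOn hS, h.qcoef_image K q1 q2 hs ht le_rfl hS,
    h.forestMonomial_image K hs ht hS, h.forestMonomial_image K hs ht Finset.sdiff_subset]

theorem subforestSum_eq_of_eqvGen {a b : TreeObj n}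
    (h : EqvGen (fun a b : TreeObj n => PIso a.1 b.1) a b) :
    subforestSum K q1 q2 a.1 = subforestSum K q1 q2 b.1 := by
  induction h with
  | rel x y hxy =>
    obtain ⟨f, g, hf⟩ := hxy.exists_fIso x.2.1 y.2.1
    exact (hf.subforestSum_eq K q1 q2 x.2.1 y.2.1).symm
  | refl => rfl
  | symm _ _ _ ih => exact ih.symm
  | trans _ _ _ _ _ ih₁ ih₂ => exact ih₁.trans ih₂

theorem deltaC_X_mk (a : TreeObj n) :
    DeltaC K q1 q2 (MvPolynomial.X (Quot.mk _ a)) = subforestSum K q1 q2 a.1 :=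
  (MvPolynomial.aeval_X _ _).trans
    (subforestSum_eq_of_eqvGen K q1 q2 (Quot.eq.1 (Quot.out_eq _)))

theorem deltaC_X_mkClass {t : PForest n} (ht : t.WF ∧ t.IsTree) :
    DeltaC K q1 q2 (MvPolynomial.X (mkClass t)) = subforestSum K q1 q2 t := by
  have hmk : mkClass t = Quot.mk _ (⟨t, ht⟩ : TreeObj n) := dif_pos ht
  rw [hmk]
  exact deltaC_X_mk K q1 q2 ⟨t, ht⟩

end Invariance

/-! ### The subforest formula -/

section SubforestFormula

open PForest TensorProduct

variable (K : Type*) [Field K] {n : ℕ} [NeZero n] (q1 q2 : Fin n → K) {u : PForest n}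

def subforestSumOn (u : PForest n) (S : Finset ℕ) : Cn K n ⊗[K] Cn K n :=
  ∑ A ∈ S.powerset, qcoef K q1 q2 u S A • (forestMonomial K u A ⊗ₜ[K] forestMonomial K u (S \ A))

theorem subforestSum_restrict (hwf : u.WF) {S : Finset ℕ} (hS : S ⊆ u.verts) :
    subforestSum K q1 q2 (u.restrict S) = subforestSumOn K q1 q2 u S := by
  unfold subforestSum subforestSumOn
  rw [show (u.restrict S).verts = S from Finset.inter_eq_left.2 hS]
  refine Finset.sum_congr rfl fun A hA => ?_
  rw [Finset.mem_powerset] at hA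
  rw [qcoef_restrict q1 q2 hwf hS hA, forestMonomial_restrict K hwf hS hA,
    forestMonomial_restrict K hwf hS Finset.sdiff_subset]

theorem subforestSumOn_mul_subforestSumOn (hwf : u.WF) {C : Finset ℕ} (hCV : C ⊆ u.verts)
    (hC : u.AncClosed C) (hC' : u.AncClosed (u.verts \ C)) :
    subforestSumOn K q1 q2 u C * subforestSumOn K q1 q2 u (u.verts \ C) =
      subforestSum K q1 q2 u := by
  unfold subforestSumOn subforestSum
  rw [Finset.sum_mul_sum, ← Finset.union_sdiff_of_subset hCV,
    ← Finset.sum_powerset_sum_powerset_union Finset.disjoint_sdiff,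
    Finset.union_sdiff_of_subset hCV]
  refine Finset.sum_congr rfl fun A hA => Finset.sum_congr rfl fun B hB => ?_
  rw [Finset.mem_powerset] at hA hB
  have hrest : C \ A ∪ (u.verts \ C) \ B = u.verts \ (A ∪ B) := by
    ext x
    have := @hCV x
    have := @hA x
    have := @hB x
    simp only [Finset.mem_union, Finset.mem_sdiff] at *
    tauto
  rw [smul_mul_smul_comm, Algebra.TensorProduct.tmul_mul_tmul,
    qcoef_mul_qcoef_of_ancClosed q1 q2 hwf hCV hC hC' hA hB,
    ← forestMonomial_union K (separated_of_ancClosed hCV hC hC' hA hB),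
    ← forestMonomial_union K (separated_of_ancClosed hCV hC hC' Finset.sdiff_subset
      Finset.sdiff_subset), hrest]

theorem deltaC_forestMonomial_verts (hwf : u.WF) :
    DeltaC K q1 q2 (forestMonomial K u u.verts) = subforestSum K q1 q2 u := by
  induction hcard : u.verts.card using Nat.strong_induction_on generalizing u with
  | _ N ih =>
    obtain h0 | ⟨v, hv⟩ := u.verts.eq_empty_or_nonempty
    · simp only [subforestSum, h0, forestMonomial_empty, map_one, Finset.powerset_empty,
        Finset.sum_singleton, qcoef_empty q1 q2 hwf, Finset.sdiff_empty, one_smul]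
      exact Algebra.TensorProduct.one_def
    -- split off the component `C` of a root: it is a tree, and the rest has fewer vertices
    obtain ⟨r, hvr, hr⟩ := hwf.exists_root v
    have hrv : r ∈ u.verts := hwf.anc_mem hvr hv
    set C := u.compSet u.verts r
    have hCV : C ⊆ u.verts := compSet_subset _ _
    have hC : u.AncClosed C := ancClosed_compSet_of_parent_eq_none hwf hr
    have hC' : u.AncClosed (u.verts \ C) := ancClosed_verts_sdiff_compSet hwf r
    have htree : (u.restrict C).WF ∧ (u.restrict C).IsTree :=
      ⟨hwf.restrict _,
        restrict_compSet_isTree hwf le_rfl (mem_sroots_verts_of_parent_eq_none hrv hr)⟩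
    have hrest : DeltaC K q1 q2 (forestMonomial K u (u.verts \ C)) =
        subforestSum K q1 q2 (u.restrict (u.verts \ C)) := by
      have hverts : (u.restrict (u.verts \ C)).verts = u.verts \ C :=
        Finset.inter_eq_left.2 Finset.sdiff_subset
      have hlt : (u.verts \ C).card < N := hcard ▸ Finset.card_lt_card
        (Finset.sdiff_ssubset hCV ⟨r, mem_compSet_self hrv⟩)
      rw [← ih _ hlt (hwf.restrict _) (by rw [hverts]), hverts,
        forestMonomial_restrict K hwf Finset.sdiff_subset le_rfl]
    rw [← Finset.union_sdiff_of_subset hCV,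
      forestMonomial_union K (separated_of_ancClosed hCV hC hC' le_rfl le_rfl), map_mul,
      forestMonomial_compSet K hrv hr, deltaC_X_mkClass K q1 q2 htree, hrest,
      subforestSum_restrict K q1 q2 hwf hCV, subforestSum_restrict K q1 q2 hwf Finset.sdiff_subset,
      subforestSumOn_mul_subforestSumOn K q1 q2 hwf hCV hC hC']

theorem deltaC_forestMonomial (hwf : u.WF) {S : Finset ℕ} (hS : S ⊆ u.verts) :
    DeltaC K q1 q2 (forestMonomial K u S) = subforestSumOn K q1 q2 u S := by
  have h := deltaC_forestMonomial_verts K q1 q2 (hwf.restrict S)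
  rwa [show (u.restrict S).verts = S from Finset.inter_eq_left.2 hS,
    forestMonomial_restrict K hwf hS le_rfl, subforestSum_restrict K q1 q2 hwf hS] at h

end SubforestFormula

/-! ### Coassociativity and the counit -/

section Bialgebra

open PForest TensorProduct

variable (K : Type*) [Field K] {n : ℕ} [NeZero n] (q1 q2 : Fin n → K) {u : PForest n}

theorem X_eq_forestMonomial_out (T : TreeClass n) :
    MvPolynomial.X T = forestMonomial K (Quot.out T).1 (Quot.out T).1.verts := by
  rw [forestMonomial_verts_of_isTree K (Quot.out T).2]
  have hmk : mkClass (Quot.out T).1 = Quot.mk _ (Quot.out T) := dif_pos (Quot.out T).2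
  rw [hmk]
  exact congrArg _ (Quot.out_eq T).symm

theorem deltaC_X (T : TreeClass n) :
    DeltaC K q1 q2 (MvPolynomial.X T) = subforestSum K q1 q2 (Quot.out T).1 :=
  MvPolynomial.aeval_X _ T

theorem epsC_X (T : TreeClass n) : epsC K (MvPolynomial.X T) = 0 :=
  MvPolynomial.aeval_X _ T

theorem epsC_forestMonomial (hwf : u.WF) {S : Finset ℕ} (hS : S.Nonempty) :
    epsC K (forestMonomial K u S) = 0 := by
  obtain ⟨r, hr⟩ := sroots_nonempty hwf hS
  rw [forestMonomial, map_prod]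
  exact Finset.prod_eq_zero hr (epsC_X K _)

theorem assoc_map_deltaC_subforestSum (hwf : u.WF) :
    TensorProduct.assoc K _ _ _
        (TensorProduct.map (DeltaC K q1 q2).toLinearMap LinearMap.id (subforestSum K q1 q2 u)) =
      ∑ S ∈ u.verts.powerset, ∑ A ∈ S.powerset,
        (qcoef K q1 q2 u u.verts S * qcoef K q1 q2 u S A) •
          (forestMonomial K u A ⊗ₜ[K]
            (forestMonomial K u (S \ A) ⊗ₜ[K] forestMonomial K u (u.verts \ S))) := by
  rw [subforestSum, map_sum, map_sum]
  refine Finset.sum_congr rfl fun S hS => ?_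
  rw [map_smul, map_smul, map_tmul, AlgHom.toLinearMap_apply, LinearMap.id_apply,
    deltaC_forestMonomial K q1 q2 hwf (Finset.mem_powerset.1 hS), subforestSumOn, sum_tmul, map_sum,
    Finset.smul_sum]
  refine Finset.sum_congr rfl fun A _ => ?_
  rw [← smul_tmul', map_smul, assoc_tmul, smul_smul]

theorem map_deltaC_subforestSum (hwf : u.WF) :
    TensorProduct.map LinearMap.id (DeltaC K q1 q2).toLinearMap (subforestSum K q1 q2 u) =
      ∑ A ∈ u.verts.powerset, ∑ B ∈ (u.verts \ A).powerset,
        (qcoef K q1 q2 u u.verts A * qcoef K q1 q2 u (u.verts \ A) B) •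
          (forestMonomial K u A ⊗ₜ[K]
            (forestMonomial K u B ⊗ₜ[K] forestMonomial K u ((u.verts \ A) \ B))) := by
  rw [subforestSum, map_sum]
  refine Finset.sum_congr rfl fun A _ => ?_
  rw [map_smul, map_tmul, AlgHom.toLinearMap_apply, LinearMap.id_apply,
    deltaC_forestMonomial K q1 q2 hwf Finset.sdiff_subset, subforestSumOn, tmul_sum,
    Finset.smul_sum]
  refine Finset.sum_congr rfl fun B _ => ?_
  rw [tmul_smul, smul_smul]

theorem coassoc_subforestSum (hwf : u.WF) :
    TensorProduct.assoc K _ _ _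
        (TensorProduct.map (DeltaC K q1 q2).toLinearMap LinearMap.id (subforestSum K q1 q2 u)) =
      TensorProduct.map LinearMap.id (DeltaC K q1 q2).toLinearMap (subforestSum K q1 q2 u) := by
  rw [assoc_map_deltaC_subforestSum K q1 q2 hwf, map_deltaC_subforestSum K q1 q2 hwf,
    Finset.sum_powerset_sum_powerset_comm]
  refine Finset.sum_congr rfl fun A hA => Finset.sum_congr rfl fun B hB => ?_
  rw [Finset.mem_powerset] at hA hB
  have hAB : A ∪ B ⊆ u.verts := Finset.union_subset hA (hB.trans Finset.sdiff_subset)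
  have hBA : (A ∪ B) \ A = B := by
    rw [Finset.union_sdiff_left, Finset.sdiff_eq_self_of_disjoint
      (Finset.disjoint_of_subset_left hB Finset.sdiff_disjoint)]
  rw [qcoef_mul_qcoef_of_subset q1 q2 hwf Finset.subset_union_left hAB, hBA,
    show u.verts \ (A ∪ B) = (u.verts \ A) \ B from sdiff_sdiff_left.symm]

theorem lid_map_epsC_subforestSum (hwf : u.WF) :
    TensorProduct.lid K _ (TensorProduct.map (epsC K).toLinearMap LinearMap.id
      (subforestSum K q1 q2 u)) = forestMonomial K u u.verts := by
  rw [subforestSum, map_sum, map_sum, Finset.sum_eq_single ∅]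
  · rw [map_smul, map_smul, map_tmul, AlgHom.toLinearMap_apply, forestMonomial_empty, map_one,
      LinearMap.id_apply, lid_tmul, one_smul, qcoef_empty q1 q2 hwf, one_smul, Finset.sdiff_empty]
  · intro S _ hS
    rw [map_smul, map_smul, map_tmul, AlgHom.toLinearMap_apply,
      epsC_forestMonomial K hwf (Finset.nonempty_iff_ne_empty.2 hS), zero_tmul, map_zero, smul_zero]
  · exact fun h => absurd (Finset.empty_mem_powerset _) h

theorem rid_map_epsC_subforestSum (hwf : u.WF) :
    TensorProduct.rid K _ (TensorProduct.map LinearMap.id (epsC K).toLinearMap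
      (subforestSum K q1 q2 u)) = forestMonomial K u u.verts := by
  rw [subforestSum, map_sum, map_sum, Finset.sum_eq_single u.verts]
  · rw [map_smul, map_smul, map_tmul, AlgHom.toLinearMap_apply, Finset.sdiff_self,
      forestMonomial_empty, map_one, LinearMap.id_apply, rid_tmul, one_smul, qcoef_self q1 q2 hwf,
      one_smul]
  · intro S hSV hS
    have hne : (u.verts \ S).Nonempty := Finset.sdiff_nonempty.2 fun hVS =>
      hS (Finset.Subset.antisymm (Finset.mem_powerset.1 hSV) hVS)
    rw [map_smul, map_smul, map_tmul, AlgHom.toLinearMap_apply, epsC_forestMonomial K hwf hne,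
      tmul_zero, map_zero, smul_zero]
  · exact fun h => absurd (Finset.mem_powerset_self _) h

end Bialgebra

end

theorem Cn_bialgebra (K : Type*) [Field K] (n : ℕ) [NeZero n]
    (q1 q2 : Fin n → K) :
    -- Δ is given on the monomial basis by the subforest formula
    (∀ u : PForest n, u.WF →
        DeltaC K q1 q2 (forestMonomial K u u.verts) =
          ∑ S ∈ u.verts.powerset,
            qcoef K q1 q2 u u.verts S •
              (forestMonomial K u S ⊗ₜ[K] forestMonomial K u (u.verts \ S))) ∧
    -- ε kills every tree
    (∀ T : TreeClass n, epsC K (MvPolynomial.X T) = 0) ∧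
    -- Δ is coassociative
    (∀ x : Cn K n,
        (TensorProduct.assoc K (Cn K n) (Cn K n) (Cn K n))
            ((TensorProduct.map (DeltaC K q1 q2).toLinearMap LinearMap.id)
              (DeltaC K q1 q2 x))
          = (TensorProduct.map LinearMap.id (DeltaC K q1 q2).toLinearMap)
              (DeltaC K q1 q2 x)) ∧
    -- ε is a counit for Δ
    (∀ x : Cn K n,
        (TensorProduct.lid K (Cn K n))
            ((TensorProduct.map (epsC K).toLinearMap LinearMap.id)
              (DeltaC K q1 q2 x)) = x) ∧
    (∀ x : Cn K n,
        (TensorProduct.rid K (Cn K n))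
            ((TensorProduct.map LinearMap.id (epsC K).toLinearMap)
              (DeltaC K q1 q2 x)) = x) := by
  refine ⟨fun u hu => deltaC_forestMonomial_verts K q1 q2 hu, epsC_X K,
    MvPolynomial.coassoc_of_forall_X _ fun T => ?_,
    MvPolynomial.lid_counit_of_forall_X _ _ fun T => ?_,
    MvPolynomial.rid_counit_of_forall_X _ _ fun T => ?_⟩ <;>
    rw [deltaC_X]
  · exact coassoc_subforestSum K q1 q2 (Quot.out T).2.1
  · rw [lid_map_epsC_subforestSum K q1 q2 (Quot.out T).2.1, X_eq_forestMonomial_out]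
  · rw [rid_map_epsC_subforestSum K q1 q2 (Quot.out T).2.1, X_eq_forestMonomial_out]
end
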